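/- arXiv:2101.08041 — 4 statements merged into one kernel-verified Lean document; each statement's English description precedes it below -/
import Mathlib

section
/- For ε > 0 and δ > 1, there exists a twice continuously differentiable function Φ : ℝ → ℝ with Φ ≥ 0, |x| ≤ ε + Φ(x) for all x ∈ ℝ, |Φ'(x)| ≤ 1 for all x, and 0 ≤ Φ''(x) ≤ (2/(|x| log δ))·1_{[ε/δ, ε]}(|x|) ≤ 2δ/(ε log δ) for all x ∈ ℝ. -/
open Set Real intervalIntegral

/-!
`Φ` is the second primitive of the even density `g(x) = h(s|x|) · s'(|x|)`, where
`s(y) = log (δ y / ε) / log δ` maps `[ε/δ, ε]` increasingly onto `[0, 1]` with `s'(y) = 1/(y log δ)`,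
and `h(u) = max 0 (6u(1-u))` is a continuous bump on `[0, 1]` of mass `1` and height `≤ 2`.
The substitution `u = s(y)` gives `∫₀^ε g = 1`, so `Φ'` is odd, increases from `0` to `1` on `[0, ε]`
and stays `1` beyond; hence `Φ` is even, nonnegative and `Φ(x) ≥ |x| - ε`.
-/

namespace YamadaWatanabe

def parabolicBump (u : ℝ) : ℝ := max 0 (6 * u * (1 - u))

@[fun_prop]
lemma continuous_parabolicBump : Continuous parabolicBump := by
  unfold parabolicBump
  fun_prop

lemma parabolicBump_nonneg (u : ℝ) : 0 ≤ parabolicBump u := le_max_left _ _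

lemma parabolicBump_le_two (u : ℝ) : parabolicBump u ≤ 2 :=
  max_le (by norm_num) (by nlinarith [sq_nonneg (2 * u - 1)])

lemma parabolicBump_of_nonpos {u : ℝ} (hu : u ≤ 0) : parabolicBump u = 0 :=
  max_eq_left (by nlinarith)

lemma parabolicBump_of_one_le {u : ℝ} (hu : 1 ≤ u) : parabolicBump u = 0 :=
  max_eq_left (by nlinarith)

lemma integral_parabolicBump : ∫ u in (0 : ℝ)..1, parabolicBump u = 1 := by
  have hint : ∀ f : ℝ → ℝ, Continuous f → IntervalIntegrable f MeasureTheory.volume 0 1 :=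
    fun f hf => hf.intervalIntegrable 0 1
  rw [integral_congr (g := fun u => 6 * u - 6 * u ^ 2)]
  · rw [integral_sub (hint _ (by fun_prop)) (hint _ (by fun_prop)), integral_const_mul,
      integral_const_mul, integral_id, integral_pow]
    norm_num
  · intro u hu
    rw [uIcc_of_le zero_le_one] at hu
    exact (max_eq_right (by nlinarith [hu.1, hu.2])).trans (by ring)

noncomputable def primitive (g : ℝ → ℝ) (x : ℝ) : ℝ := ∫ t in (0 : ℝ)..x, g t

section Primitive

variable {g : ℝ → ℝ} {b x : ℝ}

lemma hasDerivAt_primitive (hg : Continuous g) (x : ℝ) : HasDerivAt (primitive g) (g x) x :=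
  integral_hasDerivAt_right (hg.intervalIntegrable _ _) (hg.stronglyMeasurableAtFilter _ _)
    hg.continuousAt

lemma differentiable_primitive (hg : Continuous g) : Differentiable ℝ (primitive g) :=
  fun x => (hasDerivAt_primitive hg x).differentiableAt

lemma deriv_primitive (hg : Continuous g) : deriv (primitive g) = g :=
  funext fun x => (hasDerivAt_primitive hg x).deriv

lemma contDiff_two_primitive_primitive (hg : Continuous g) :
    ContDiff ℝ 2 (primitive (primitive g)) := by
  have hF : Continuous (primitive g) := (differentiable_primitive hg).continuous
  rw [show (2 : WithTop ℕ∞) = 1 + 1 by norm_num, contDiff_succ_iff_deriv, deriv_primitive hF,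
    contDiff_one_iff_deriv, deriv_primitive hg]
  exact ⟨differentiable_primitive hF, by simp, differentiable_primitive hg, hg⟩

lemma primitive_neg (g : ℝ → ℝ) (x : ℝ) : primitive g (-x) = -∫ t in (0 : ℝ)..x, g (-t) := by
  rw [integral_comp_neg, neg_zero, integral_symm, neg_neg]
  rfl

lemma odd_primitive_of_even (hg : g.Even) : (primitive g).Odd := fun x => by
  rw [primitive_neg, show (fun t => g (-t)) = g from funext hg]
  rfl

lemma even_primitive_of_odd (hg : g.Odd) : (primitive g).Even := fun x => by
  rw [primitive_neg, show (fun t => g (-t)) = fun t => -g t from funext hg, integral_neg, neg_neg]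
  rfl

lemma primitive_nonneg (hg : ∀ t, 0 ≤ t → 0 ≤ g t) (hx : 0 ≤ x) : 0 ≤ primitive g x :=
  integral_nonneg hx fun t ht => hg t ht.1

lemma monotone_primitive (hg : Continuous g) (hg0 : ∀ t, 0 ≤ g t) : Monotone (primitive g) :=
  monotone_of_deriv_nonneg (differentiable_primitive hg) fun x => by
    rw [deriv_primitive hg]
    exact hg0 x

lemma primitive_sub_primitive (hg : Continuous g) (x y : ℝ) :
    primitive g x - primitive g y = ∫ t in y..x, g t :=
  integral_interval_sub_left (hg.intervalIntegrable _ _) (hg.intervalIntegrable _ _)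

lemma primitive_eq_of_le (hg : Continuous g) (hgb : ∀ t, b ≤ t → g t = 0) (hx : b ≤ x) :
    primitive g x = primitive g b := by
  rw [← sub_eq_zero, primitive_sub_primitive hg,
    integral_congr (g := fun _ => 0) fun t ht => hgb t (by rw [uIcc_of_le hx] at ht; exact ht.1)]
  simp

lemma abs_primitive_le_one (hg : Continuous g) (hg_even : g.Even) (hg0 : ∀ t, 0 ≤ g t)
    (hgb : ∀ t, b ≤ t → g t = 0) (hg1 : primitive g b = 1) (x : ℝ) :
    |primitive g x| ≤ 1 := by
  have hbound : ∀ y, 0 ≤ y → |primitive g y| ≤ 1 := fun y hy => by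
    rw [abs_of_nonneg (primitive_nonneg (fun t _ => hg0 t) hy), ← hg1,
      ← primitive_eq_of_le hg hgb (le_max_right y b)]
    exact monotone_primitive hg hg0 (le_max_left y b)
  rcases le_total 0 x with hx | hx
  · exact hbound x hx
  · simpa [odd_primitive_of_even hg_even x] using hbound (-x) (neg_nonneg.mpr hx)

lemma primitive_primitive_apply_abs (hg_even : g.Even) (x : ℝ) :
    primitive (primitive g) |x| = primitive (primitive g) x := by
  rcases abs_choice x with h | h <;> rw [h]
  exact even_primitive_of_odd (odd_primitive_of_even hg_even) x

lemma primitive_primitive_nonneg (hg_even : g.Even) (hg0 : ∀ t, 0 ≤ g t) (x : ℝ) :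
    0 ≤ primitive (primitive g) x := by
  rw [← primitive_primitive_apply_abs hg_even]
  exact primitive_nonneg (fun t ht => primitive_nonneg (fun s _ => hg0 s) ht) (abs_nonneg x)

lemma abs_le_add_primitive_primitive (hg : Continuous g) (hg_even : g.Even)
    (hg0 : ∀ t, 0 ≤ g t) (hgb : ∀ t, b ≤ t → g t = 0) (hg1 : primitive g b = 1) (x : ℝ) :
    |x| ≤ b + primitive (primitive g) x := by
  have hΦ0 := primitive_primitive_nonneg hg_even hg0
  rcases le_total |x| b with hx | hx
  · linarith [hΦ0 x]
  have hF : Continuous (primitive g) := (differentiable_primitive hg).continuous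
  have hslope : primitive (primitive g) |x| - primitive (primitive g) b = |x| - b := by
    rw [primitive_sub_primitive hF, integral_congr (g := fun _ => 1) fun t ht => ?_]
    · simp
    rw [uIcc_of_le hx] at ht
    exact (primitive_eq_of_le hg hgb ht.1).trans hg1
  rw [primitive_primitive_apply_abs hg_even] at hslope
  linarith [hΦ0 b]

end Primitive

noncomputable def logScale (ε δ y : ℝ) : ℝ := Real.log (δ * y / ε) / Real.log δ

noncomputable def density (ε δ x : ℝ) : ℝ :=
  parabolicBump (logScale ε δ |x|) / (|x| * Real.log δ)

section Density

variable {ε δ : ℝ}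

lemma logScale_nonpos (hε : 0 < ε) (hδ : 1 < δ) {y : ℝ} (hy0 : 0 ≤ y) (hy : y ≤ ε / δ) :
    logScale ε δ y ≤ 0 := by
  have hδ0 : 0 < δ := zero_lt_one.trans hδ
  refine div_nonpos_of_nonpos_of_nonneg (Real.log_nonpos (by positivity) ?_) (log_nonneg hδ.le)
  rw [div_le_one hε]
  rwa [le_div_iff₀ hδ0, mul_comm] at hy

lemma one_le_logScale (hε : 0 < ε) (hδ : 1 < δ) {y : ℝ} (hy : ε ≤ y) : 1 ≤ logScale ε δ y := by
  have hδ0 : 0 < δ := zero_lt_one.trans hδ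
  rw [logScale, le_div_iff₀ (log_pos hδ), one_mul]
  exact log_le_log hδ0 (by rw [le_div_iff₀ hε]; nlinarith)

lemma hasDerivAt_logScale (hε : ε ≠ 0) (hδ : δ ≠ 0) {y : ℝ} (hy : y ≠ 0) :
    HasDerivAt (logScale ε δ) (y * Real.log δ)⁻¹ y := by
  have h := ((((hasDerivAt_id' y).const_mul δ).div_const ε).log
    (by simp [hy, hε, hδ])).div_const (Real.log δ)
  exact h.congr_deriv (by field_simp)

lemma density_of_abs_le (hε : 0 < ε) (hδ : 1 < δ) {x : ℝ} (hx : |x| ≤ ε / δ) :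
    density ε δ x = 0 := by
  rw [density, parabolicBump_of_nonpos (logScale_nonpos hε hδ (abs_nonneg x) hx), zero_div]

lemma density_of_le_abs (hε : 0 < ε) (hδ : 1 < δ) {x : ℝ} (hx : ε ≤ |x|) :
    density ε δ x = 0 := by
  rw [density, parabolicBump_of_one_le (one_le_logScale hε hδ hx), zero_div]

lemma density_nonneg (hδ : 1 < δ) (x : ℝ) : 0 ≤ density ε δ x :=
  div_nonneg (parabolicBump_nonneg _) (mul_nonneg (abs_nonneg x) (log_nonneg hδ.le))

lemma density_le (hδ : 1 < δ) (x : ℝ) : density ε δ x ≤ 2 / (|x| * Real.log δ) :=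
  div_le_div_of_nonneg_right (parabolicBump_le_two _)
    (mul_nonneg (abs_nonneg x) (log_nonneg hδ.le))

lemma even_density : (density ε δ).Even := fun x => by
  simp only [density, abs_neg]

lemma continuous_density (hε : 0 < ε) (hδ : 1 < δ) : Continuous (density ε δ) := by
  have hδ0 : 0 < δ := zero_lt_one.trans hδ
  rw [continuous_iff_continuousAt]
  intro x
  rcases eq_or_ne x 0 with rfl | hx
  · have hnhds : {y : ℝ | |y| < ε / δ} ∈ nhds 0 :=
      (isOpen_lt continuous_abs continuous_const).mem_nhds (by simpa using div_pos hε hδ0)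
    refine (continuousAt_const (y := (0 : ℝ))).congr (Filter.eventuallyEq_of_mem hnhds fun y hy => ?_)
    exact (density_of_abs_le hε hδ (le_of_lt hy)).symm
  · have habs : |x| ≠ 0 := abs_ne_zero.mpr hx
    unfold density logScale
    fun_prop (disch := first | positivity | exact mul_ne_zero habs (log_pos hδ).ne')

lemma density_le_indicator (hε : 0 < ε) (hδ : 1 < δ) (x : ℝ) :
    density ε δ x ≤ (Icc (ε / δ) ε).indicator (fun y => 2 / (y * Real.log δ)) |x| := by
  by_cases hx : |x| ∈ Icc (ε / δ) ε
  · rw [indicator_of_mem hx]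
    exact density_le hδ x
  · rw [indicator_of_notMem hx]
    rcases not_and_or.mp hx with h | h
    · exact (density_of_abs_le hε hδ (not_le.mp h).le).le
    · exact (density_of_le_abs hε hδ (not_le.mp h).le).le

lemma indicator_two_div_le (hε : 0 < ε) (hδ : 1 < δ) (y : ℝ) :
    (Icc (ε / δ) ε).indicator (fun y => 2 / (y * Real.log δ)) y ≤ 2 * δ / (ε * Real.log δ) := by
  have hδ0 : 0 < δ := zero_lt_one.trans hδ
  have hL : 0 < Real.log δ := log_pos hδ
  by_cases hy : y ∈ Icc (ε / δ) ε
  · rw [indicator_of_mem hy]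
    calc 2 / (y * Real.log δ) ≤ 2 / (ε / δ * Real.log δ) := by
          gcongr
          exact hy.1
      _ = 2 * δ / (ε * Real.log δ) := by field_simp
  · rw [indicator_of_notMem hy]
    positivity

lemma primitive_density (hε : 0 < ε) (hδ : 1 < δ) : primitive (density ε δ) ε = 1 := by
  have hδ0 : 0 < δ := zero_lt_one.trans hδ
  have ha : 0 < ε / δ := div_pos hε hδ0
  have haε : ε / δ ≤ ε := div_le_self hε.le hδ.le
  have hcont := continuous_density hε hδ
  have hlower : ∫ t in (0 : ℝ)..ε / δ, density ε δ t = 0 := by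
    rw [integral_congr (g := fun _ => 0) fun t ht => ?_]
    · simp
    rw [uIcc_of_le ha.le] at ht
    exact density_of_abs_le hε hδ (by rw [abs_of_nonneg ht.1]; exact ht.2)
  have hpos : ∀ t ∈ uIcc (ε / δ) ε, 0 < t := fun t ht =>
    ha.trans_le (by rw [uIcc_of_le haε] at ht; exact ht.1)
  have hscale0 : logScale ε δ (ε / δ) = 0 := by
    rw [logScale, mul_div_cancel₀ _ hδ0.ne', div_self hε.ne', log_one, zero_div]
  have hscale1 : logScale ε δ ε = 1 := by
    rw [logScale, mul_div_assoc, div_self hε.ne', mul_one, div_self (log_pos hδ).ne']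
  have hupper : ∫ t in ε / δ..ε, density ε δ t = 1 := by
    rw [integral_congr (g := fun t => (parabolicBump ∘ logScale ε δ) t * (t * Real.log δ)⁻¹)
      fun t ht => ?_]
    · rw [integral_comp_mul_deriv (fun t ht => hasDerivAt_logScale hε.ne' hδ0.ne' (hpos t ht).ne')
        ?_ continuous_parabolicBump, hscale0, hscale1, integral_parabolicBump]
      exact ContinuousOn.inv₀ (by fun_prop) fun t ht => (mul_pos (hpos t ht) (log_pos hδ)).ne'
    · simp [density, abs_of_pos (hpos t ht), div_eq_mul_inv]
  rw [primitive, ← integral_add_adjacent_intervals (hcont.intervalIntegrable 0 (ε / δ))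
    (hcont.intervalIntegrable _ _), hlower, hupper, zero_add]

end Density

end YamadaWatanabe

open YamadaWatanabe in
theorem yamada_watanabe_smoothing (ε δ : ℝ) (hε : 0 < ε) (hδ : 1 < δ) :
    ∃ Φ : ℝ → ℝ, ContDiff ℝ 2 Φ ∧
      (∀ x, 0 ≤ Φ x) ∧
      (∀ x, |x| ≤ ε + Φ x) ∧
      (∀ x, |deriv Φ x| ≤ 1) ∧
      (∀ x, 0 ≤ deriv (deriv Φ) x ∧
        deriv (deriv Φ) x ≤
          (Icc (ε / δ) ε).indicator (fun y => 2 / (y * Real.log δ)) |x| ∧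
        (Icc (ε / δ) ε).indicator (fun y => 2 / (y * Real.log δ)) |x| ≤
          2 * δ / (ε * Real.log δ)) := by
  have hg := continuous_density hε hδ
  have hg0 : ∀ t, 0 ≤ density ε δ t := density_nonneg hδ
  have hgε : ∀ t, ε ≤ t → density ε δ t = 0 := fun t ht =>
    density_of_le_abs hε hδ (ht.trans (le_abs_self t))
  have hg1 := primitive_density hε hδ
  have hΦ' : deriv (primitive (primitive (density ε δ))) = primitive (density ε δ) :=
    deriv_primitive (differentiable_primitive hg).continuous
  refine ⟨primitive (primitive (density ε δ)), contDiff_two_primitive_primitive hg,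
    primitive_primitive_nonneg even_density hg0,
    abs_le_add_primitive_primitive hg even_density hg0 hgε hg1, fun x => ?_, fun x => ?_⟩
  · rw [hΦ']
    exact abs_primitive_le_one hg even_density hg0 hgε hg1 x
  · rw [hΦ', deriv_primitive hg]
    exact ⟨hg0 x, density_le_indicator hε hδ x, indicator_two_div_le hε hδ |x|⟩
end

section
/- Let μ : [0,∞) → [0,∞) be continuous, non-decreasing, μ(0)=0, and let f : ℝ × ℝ → ℝ be continuous, bounded in its first argument, locally Lipschitz in its second argument, and of linear growth in its second argument uniformly over the first argument in compacts. Let s : [0,∞) → ℝ be continuous. Then for every x₀ ∈ ℝ there exists a unique continuous Y : [0,∞) → ℝ satisfying Y(t) = x₀ + ∫₀^t f(s(u), Y(u)) dμ(u) for all t ∈ [0,∞), where the integral is a Riemann–Stieltjes integral. -/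
/-!
On an interval where `L * (F b - F a) ≤ 1/2`, the Picard operator
`X ↦ y₀ + ∫_{(a, t]} g(u, X u) dF(u)` is a `1/2`-contraction of `C([a, b], ℝ)` when `g` is
`L`-Lipschitz in its second argument. Since `F` is continuous, every `[a, b]` splits into finitely
many such pieces, and solutions on consecutive pieces glue; the same splitting gives a Gronwall
inequality for `dF`. Linear growth and Gronwall bound every solution on `[0, T]` a priori, so
truncating `f` in its second argument at that level gives a globally Lipschitz equation with the
same solutions. Solutions on `[0, n]` agree by uniqueness and patch together on `[0, ∞)`.
-/

open Set MeasureTheory Filter Topology NNReal Function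

theorem induction_on_small_increments {F : ℝ → ℝ} (hF : Continuous F) {ε : ℝ} (hε : 0 < ε)
    {P : ℝ → ℝ → Prop} (small : ∀ a b, a ≤ b → F b - F a ≤ ε → P a b)
    (step : ∀ a c b, a ≤ c → c ≤ b → F c - F a ≤ ε → P c b → P a b)
    {a b : ℝ} (hab : a ≤ b) : P a b := by
  suffices h : ∀ n : ℕ, ∀ a b, a ≤ b → F b - F a ≤ n * ε → P a b by
    obtain ⟨n, hn⟩ := exists_nat_ge ((F b - F a) / ε)
    exact h n a b hab ((div_le_iff₀ hε).1 hn)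
  intro n
  induction n with
  | zero => exact fun a b hab h => small a b hab (by simp at h; linarith)
  | succ n ih =>
    intro a b hab h
    by_cases hsmall : F b - F a ≤ ε
    · exact small a b hab hsmall
    obtain ⟨c, hc, hFc⟩ := intermediate_value_Icc hab hF.continuousOn
      (show F a + ε ∈ Icc (F a) (F b) from ⟨by linarith, by linarith⟩)
    exact step a c b hc.1 hc.2 (by linarith) (ih c b hc.2 (by push_cast at h; linarith))

theorem setIntegral_Ioc_add {E : Type*} [NormedAddCommGroup E] [NormedSpace ℝ E] {μ : Measure ℝ}
    {h : ℝ → E} {a c b : ℝ} (hac : a ≤ c) (hcb : c ≤ b) (hh : IntegrableOn h (Ioc a b) μ) :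
    ∫ u in Ioc a c, h u ∂μ + ∫ u in Ioc c b, h u ∂μ = ∫ u in Ioc a b, h u ∂μ := by
  rw [← Ioc_union_Ioc_eq_Ioc hac hcb, setIntegral_union (Ioc_disjoint_Ioc_of_le le_rfl)
    measurableSet_Ioc (hh.mono_set (Ioc_subset_Ioc_right hcb))
    (hh.mono_set (Ioc_subset_Ioc_left hac))]

theorem exists_continuous_eqOn_Icc_of_nat {X : Type*} [TopologicalSpace X] {Y : ℕ → ℝ → X}
    (hY : ∀ n, Continuous (Y n)) (hcompat : ∀ m n, m ≤ n → EqOn (Y m) (Y n) (Icc 0 m)) :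
    ∃ Z : ℝ → X, Continuous Z ∧ ∀ n : ℕ, EqOn Z (Y n) (Icc 0 n) := by
  have hceil : ∀ (n : ℕ) (t : ℝ), t ≤ n → Y ⌈t⌉₊ (max t 0) = Y n (max t 0) := fun n t ht =>
    hcompat _ _ (Nat.ceil_le.2 ht) ⟨le_max_right _ _, max_le (Nat.le_ceil t) (Nat.cast_nonneg _)⟩
  refine ⟨fun t => Y ⌈t⌉₊ (max t 0), continuous_iff_continuousAt.2 fun t₀ => ?_, fun n t ht => ?_⟩
  · have hlt : t₀ < (⌈t₀⌉₊ + 1 : ℕ) := by push_cast; linarith [Nat.le_ceil t₀]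
    exact ((hY _).comp (continuous_id.max continuous_const)).continuousAt.congr
      (eventually_of_mem (Iio_mem_nhds hlt) fun t ht => (hceil _ t (le_of_lt ht)).symm)
  · simpa only [max_eq_left ht.1] using hceil n t ht.2

namespace StieltjesFunction

variable {F : StieltjesFunction ℝ}

theorem nullSingletonClass_of_continuous (hF : Continuous F) : NullSingletonClass F.measure :=
  ⟨fun a => by rw [F.measure_singleton,
    leftLim_eq_of_tendsto ((hF.tendsto a).mono_left nhdsWithin_le_nhds), sub_self,
    ENNReal.ofReal_zero]⟩

theorem abs_setIntegral_Ioc_le {h : ℝ → ℝ} {a b M : ℝ} (hab : a ≤ b)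
    (hM : ∀ u ∈ Ioc a b, |h u| ≤ M) :
    |∫ u in Ioc a b, h u ∂F.measure| ≤ M * (F b - F a) := by
  have := norm_setIntegral_le_of_norm_le_const (μ := F.measure) (f := h)
    (by rw [F.measure_Ioc]; exact ENNReal.ofReal_lt_top) hM
  rwa [measureReal_def, F.measure_Ioc, ENNReal.toReal_ofReal (sub_nonneg.2 (F.mono hab))] at this

theorem setIntegral_Ioc_le {φ : ℝ → ℝ} {a b M : ℝ} (hab : a ≤ b)
    (hφ0 : ∀ u ∈ Ioc a b, 0 ≤ φ u) (hM : ∀ u ∈ Ioc a b, φ u ≤ M) :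
    ∫ u in Ioc a b, φ u ∂F.measure ≤ M * (F b - F a) :=
  (le_abs_self _).trans <| abs_setIntegral_Ioc_le hab fun u hu => by
    rw [abs_of_nonneg (hφ0 u hu)]; exact hM u hu

end StieltjesFunction

namespace StieltjesODE

def IsSolutionOn (F : StieltjesFunction ℝ) (g : ℝ → ℝ → ℝ) (a b y₀ : ℝ) (Y : ℝ → ℝ) : Prop :=
  ∀ t ∈ Icc a b, Y t = y₀ + ∫ u in Ioc a t, g u (Y u) ∂F.measure

variable {F : StieltjesFunction ℝ} {g : ℝ → ℝ → ℝ} {a b c y₀ : ℝ} {Y Z : ℝ → ℝ}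

namespace IsSolutionOn

theorem apply_left (hY : IsSolutionOn F g a b y₀ Y) (hab : a ≤ b) : Y a = y₀ := by
  simpa using hY a ⟨le_rfl, hab⟩

theorem mono_right (hY : IsSolutionOn F g a b y₀ Y) {b' : ℝ} (hb : b' ≤ b) :
    IsSolutionOn F g a b' y₀ Y :=
  fun t ht => hY t ⟨ht.1, ht.2.trans hb⟩

theorem congr (hY : IsSolutionOn F g a b y₀ Y) (hYZ : EqOn Y Z (Icc a b)) :
    IsSolutionOn F g a b y₀ Z := by
  intro t ht
  rw [← hYZ ht, hY t ht]
  congr 1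
  exact setIntegral_congr_fun measurableSet_Ioc fun u hu => by
    rw [hYZ ⟨hu.1.le, hu.2.trans ht.2⟩]

theorem congr_fun {g' : ℝ → ℝ → ℝ} (hY : IsSolutionOn F g a b y₀ Y)
    (hg : ∀ u ∈ Icc a b, g u (Y u) = g' u (Y u)) : IsSolutionOn F g' a b y₀ Y := by
  intro t ht
  rw [hY t ht]
  congr 1
  exact setIntegral_congr_fun measurableSet_Ioc fun u hu => hg u ⟨hu.1.le, hu.2.trans ht.2⟩

theorem restart (hY : IsSolutionOn F g a b y₀ Y) (hc : c ∈ Icc a b)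
    (hint : Continuous fun u => g u (Y u)) : IsSolutionOn F g c b (Y c) Y := by
  intro t ht
  rw [hY t ⟨hc.1.trans ht.1, ht.2⟩, hY c hc, add_assoc,
    setIntegral_Ioc_add hc.1 ht.1 hint.integrableOn_Ioc]

theorem append (h₁ : IsSolutionOn F g a c y₀ Y) (h₂ : IsSolutionOn F g c b (Y c) Y) (hac : a ≤ c)
    (hint : Continuous fun u => g u (Y u)) : IsSolutionOn F g a b y₀ Y := by
  intro t ht
  rcases le_total t c with htc | hct
  · exact h₁ t ⟨ht.1, htc⟩
  · rw [h₂ t ⟨hct, ht.2⟩, h₁ c ⟨hac, le_rfl⟩, add_assoc,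
      setIntegral_Ioc_add hac hct hint.integrableOn_Ioc]

end IsSolutionOn

noncomputable def picard (hF : Continuous F) (hgc : Continuous (uncurry g)) (hab : a ≤ b)
    (y₀ : ℝ) (X : C(Icc a b, ℝ)) : C(Icc a b, ℝ) where
  toFun t := y₀ + ∫ u in a..t, g u (IccExtend hab X u) ∂F.measure
  continuous_toFun := by
    -- `F.measure` has no atoms, which is what makes the primitive continuous.
    have := F.nullSingletonClass_of_continuous hF
    have hint : Continuous fun u => g u (IccExtend hab X u) :=
      hgc.comp (continuous_id.prodMk X.continuous.Icc_extend')
    exact continuous_const.add <| (intervalIntegral.continuous_primitive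
      (fun _ _ => hint.intervalIntegrable _ _) a).comp continuous_subtype_val

theorem picard_apply (hF : Continuous F) (hgc : Continuous (uncurry g)) (hab : a ≤ b)
    (X : C(Icc a b, ℝ)) (t : Icc a b) :
    picard hF hgc hab y₀ X t = y₀ + ∫ u in Ioc a t, g u (IccExtend hab X u) ∂F.measure :=
  congrArg (y₀ + ·) (intervalIntegral.integral_of_le t.2.1)

theorem isFixedPt_picard_iff (hF : Continuous F) (hgc : Continuous (uncurry g)) (hab : a ≤ b)
    (X : C(Icc a b, ℝ)) :
    IsFixedPt (picard hF hgc hab y₀) X ↔ IsSolutionOn F g a b y₀ (IccExtend hab X) := by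
  refine ⟨fun h t ht => ?_, fun h => ContinuousMap.ext fun t => ?_⟩
  · rw [IccExtend_of_mem hab X ht, ← picard_apply hF hgc hab X ⟨t, ht⟩, h]
  · rw [picard_apply, ← h t t.2, IccExtend_val]

theorem contractingWith_picard (hF : Continuous F) (hgc : Continuous (uncurry g)) {L : ℝ≥0}
    (hg : ∀ u, LipschitzWith L (g u)) (hab : a ≤ b)
    (hsmall : L * (F b - F a) ≤ 1 / 2) : ContractingWith (1 / 2) (picard hF hgc hab y₀) := by
  have hint : ∀ X : C(Icc a b, ℝ), Continuous fun u => g u (IccExtend hab X u) := fun X =>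
    hgc.comp (continuous_id.prodMk X.continuous.Icc_extend')
  refine ⟨by norm_num, LipschitzWith.of_dist_le_mul fun X X' => ?_⟩
  rw [ContinuousMap.dist_le (by positivity)]
  intro t
  have hpoint : ∀ u, |g u (IccExtend hab X u) - g u (IccExtend hab X' u)| ≤ L * dist X X' :=
    fun u => by
      simpa only [Real.dist_eq, IccExtend_apply] using ((hg u).dist_le_mul _ _).trans
        (mul_le_mul_of_nonneg_left (ContinuousMap.dist_apply_le_dist _) L.2)
  rw [Real.dist_eq, picard_apply, picard_apply, add_sub_add_left_eq_sub,
    ← integral_sub (hint X).integrableOn_Ioc (hint X').integrableOn_Ioc]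
  calc _ ≤ L * dist X X' * (F t - F a) :=
        StieltjesFunction.abs_setIntegral_Ioc_le t.2.1 fun u _ => hpoint u
    _ ≤ L * dist X X' * (F b - F a) := by gcongr; exact t.2.2
    _ ≤ _ := by push_cast; nlinarith [dist_nonneg (x := X) (y := X')]

theorem existsUnique_isSolutionOn_of_small (hF : Continuous F) (hgc : Continuous (uncurry g))
    {L : ℝ≥0} (hg : ∀ u, LipschitzWith L (g u)) (hab : a ≤ b) (hsmall : L * (F b - F a) ≤ 1 / 2)
    (y₀ : ℝ) :
    ∃ Y, Continuous Y ∧ IsSolutionOn F g a b y₀ Y ∧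
      ∀ Z, Continuous Z → IsSolutionOn F g a b y₀ Z → EqOn Z Y (Icc a b) := by
  have hΦ := contractingWith_picard hF hgc (y₀ := y₀) hg hab hsmall
  set X := ContractingWith.fixedPoint _ hΦ
  refine ⟨IccExtend hab X, X.continuous.Icc_extend',
    (isFixedPt_picard_iff hF hgc hab X).1 hΦ.fixedPoint_isFixedPt, fun Z hZc hZ t ht => ?_⟩
  let Zr : C(Icc a b, ℝ) := ⟨fun t => Z t, hZc.comp continuous_subtype_val⟩
  have hZr : EqOn Z (IccExtend hab Zr) (Icc a b) := fun t ht => (IccExtend_of_mem hab Zr ht).symm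
  have hZX : Zr = X :=
    hΦ.fixedPoint_unique ((isFixedPt_picard_iff hF hgc hab Zr).2 (hZ.congr hZr))
  rw [hZr ht, hZX]

theorem existsUnique_isSolutionOn (hF : Continuous F) (hgc : Continuous (uncurry g)) {L : ℝ≥0}
    (hg : ∀ u, LipschitzWith L (g u)) (hab : a ≤ b) (y₀ : ℝ) :
    ∃ Y, Continuous Y ∧ IsSolutionOn F g a b y₀ Y ∧
      ∀ Z, Continuous Z → IsSolutionOn F g a b y₀ Z → EqOn Z Y (Icc a b) := by
  have hint : ∀ Y : ℝ → ℝ, Continuous Y → Continuous fun u => g u (Y u) := fun Y hY =>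
    hgc.comp (continuous_id.prodMk hY)
  revert y₀
  refine induction_on_small_increments (F := fun t => L * F t) (continuous_const.mul hF)
    one_half_pos
    (fun a b hab hsmall => existsUnique_isSolutionOn_of_small hF hgc hg hab (by rwa [mul_sub]))
    (fun a c b hac hcb hsmall ih y₀ => ?_) hab
  obtain ⟨Y₁, hY₁c, hY₁, huniq₁⟩ :=
    existsUnique_isSolutionOn_of_small hF hgc hg hac (by rwa [mul_sub]) y₀
  obtain ⟨Y₂, hY₂c, hY₂, huniq₂⟩ := ih (Y₁ c)
  have hc : Y₂ c = Y₁ c := hY₂.apply_left hcb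
  let Y t := if t ≤ c then Y₁ t else Y₂ t
  have hYc : Continuous Y :=
    Continuous.if_le hY₁c hY₂c continuous_id continuous_const fun t ht => by rw [ht, hc]
  have hY₁Y : EqOn Y₁ Y (Icc a c) := fun t ht => (if_pos ht.2).symm
  have hY₂Y : EqOn Y₂ Y (Icc c b) := fun t ht => by
    by_cases htc : t ≤ c
    · simp [Y, le_antisymm htc ht.1, hc]
    · simp only [Y, if_neg htc]
  have hYc₁ : Y c = Y₁ c := if_pos le_rfl
  refine ⟨Y, hYc, (hY₁.congr hY₁Y).append (hYc₁ ▸ hY₂.congr hY₂Y) hac (hint Y hYc),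
    fun Z hZc hZ => ?_⟩
  have h₁ : EqOn Z Y₁ (Icc a c) := huniq₁ Z hZc (hZ.mono_right hcb)
  have h₂ : EqOn Z Y₂ (Icc c b) :=
    huniq₂ Z hZc (h₁ ⟨hac, le_rfl⟩ ▸ hZ.restart ⟨hac, hcb⟩ (hint Z hZc))
  rw [← Icc_union_Icc_eq_Icc hac hcb]
  exact (h₁.trans hY₁Y).union (h₂.trans hY₂Y)

section Gronwall

variable {φ : ℝ → ℝ} {A C : ℝ}

theorem le_two_mul_of_le_add_mul_integral (hφc : Continuous φ) (hφ0 : ∀ u, 0 ≤ φ u) (hC : 0 ≤ C)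
    (hab : a ≤ b) (hsmall : C * (F b - F a) ≤ 1 / 2)
    (hφ : ∀ t ∈ Icc a b, φ t ≤ A + C * ∫ u in Ioc a t, φ u ∂F.measure) :
    ∀ t ∈ Icc a b, φ t ≤ 2 * A := by
  obtain ⟨t₀, ht₀, hmax⟩ := isCompact_Icc.exists_isMaxOn (nonempty_Icc.2 hab) hφc.continuousOn
  have hint : ∫ u in Ioc a t₀, φ u ∂F.measure ≤ φ t₀ * (F t₀ - F a) :=
    StieltjesFunction.setIntegral_Ioc_le ht₀.1 (fun u _ => hφ0 u)
      fun u hu => hmax ⟨hu.1.le, hu.2.trans ht₀.2⟩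
  have hsmall₀ : C * (F t₀ - F a) ≤ 1 / 2 :=
    (mul_le_mul_of_nonneg_left (by linarith [F.mono ht₀.2]) hC).trans hsmall
  have : φ t₀ ≤ 2 * A := by
    nlinarith [hφ t₀ ht₀, mul_le_mul_of_nonneg_left hint hC,
      mul_le_mul_of_nonneg_right hsmall₀ (hφ0 t₀)]
  exact fun t ht => (hmax ht).trans this

theorem le_add_mul_integral_of_le_on_left (hφc : Continuous φ) (hφ0 : ∀ u, 0 ≤ φ u)
    (hC : 0 ≤ C) (hac : a ≤ c) {M : ℝ} (hM : ∀ t ∈ Icc a c, φ t ≤ M)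
    (hφ : ∀ t ∈ Icc a b, φ t ≤ A + C * ∫ u in Ioc a t, φ u ∂F.measure) :
    ∀ t ∈ Icc c b, φ t ≤ A + C * M * (F c - F a) + C * ∫ u in Ioc c t, φ u ∂F.measure := by
  intro t ht
  have hleft : ∫ u in Ioc a c, φ u ∂F.measure ≤ M * (F c - F a) :=
    StieltjesFunction.setIntegral_Ioc_le hac (fun u _ => hφ0 u) fun u hu => hM u ⟨hu.1.le, hu.2⟩
  have := hφ t ⟨hac.trans ht.1, ht.2⟩
  rw [← setIntegral_Ioc_add hac ht.1 hφc.integrableOn_Ioc] at this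
  nlinarith [mul_le_mul_of_nonneg_left hleft hC]

theorem le_mul_exp_of_le_add_mul_integral (hF : Continuous F) (hφc : Continuous φ)
    (hφ0 : ∀ u, 0 ≤ φ u) (hC : 0 ≤ C) (hab : a ≤ b)
    (hφ : ∀ t ∈ Icc a b, φ t ≤ A + C * ∫ u in Ioc a t, φ u ∂F.measure) :
    ∀ t ∈ Icc a b, φ t ≤ 2 * A * Real.exp (2 * C * (F b - F a)) := by
  have hA : ∀ {a b A}, a ≤ b → (∀ t ∈ Icc a b, φ t ≤ A + C * ∫ u in Ioc a t, φ u ∂F.measure) →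
      0 ≤ A := fun hab hφ => by simpa using (hφ0 _).trans (hφ _ ⟨le_rfl, hab⟩)
  have hexp : ∀ {a b}, a ≤ b → 1 ≤ Real.exp (2 * C * (F b - F a)) := fun hab =>
    Real.one_le_exp (mul_nonneg (by positivity) (sub_nonneg.2 (F.mono hab)))
  refine induction_on_small_increments (F := fun t => C * F t) (continuous_const.mul hF)
    one_half_pos (P := fun a b => ∀ A : ℝ,
      (∀ t ∈ Icc a b, φ t ≤ A + C * ∫ u in Ioc a t, φ u ∂F.measure) →
        ∀ t ∈ Icc a b, φ t ≤ 2 * A * Real.exp (2 * C * (F b - F a)))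
    (fun a b hab hsmall A hφ t ht => ?_) (fun a c b hac hcb hsmall ih A hφ t ht => ?_) hab A hφ
  · calc φ t ≤ 2 * A :=
          le_two_mul_of_le_add_mul_integral hφc hφ0 hC hab (by rwa [mul_sub]) hφ t ht
      _ ≤ _ := le_mul_of_one_le_right (by linarith [hA hab hφ]) (hexp hab)
  have hA₀ := hA (hac.trans hcb) hφ
  have h₁ : ∀ t ∈ Icc a c, φ t ≤ 2 * A :=
    le_two_mul_of_le_add_mul_integral hφc hφ0 hC hac (by rwa [mul_sub])
      fun t ht => hφ t ⟨ht.1, ht.2.trans hcb⟩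
  rcases le_total t c with htc | hct
  · exact (h₁ t ⟨ht.1, htc⟩).trans (le_mul_of_one_le_right (by linarith) (hexp (hac.trans hcb)))
  calc φ t ≤ 2 * (A + C * (2 * A) * (F c - F a)) * Real.exp (2 * C * (F b - F c)) :=
        ih _ (le_add_mul_integral_of_le_on_left hφc hφ0 hC hac h₁ hφ) t ⟨hct, ht.2⟩
    _ ≤ 2 * (A * Real.exp (2 * C * (F c - F a))) * Real.exp (2 * C * (F b - F c)) := by
        gcongr
        nlinarith [Real.add_one_le_exp (2 * C * (F c - F a))]
    _ = 2 * A * Real.exp (2 * C * (F b - F a)) := by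
        rw [mul_assoc, mul_assoc, ← Real.exp_add]; ring_nf

end Gronwall

theorem abs_le_of_isSolutionOn (hF : Continuous F) (hgc : Continuous (uncurry g)) {C : ℝ}
    (hC : 0 ≤ C) (hgrowth : ∀ u ∈ Icc a b, ∀ y, |g u y| ≤ C * (1 + |y|)) (hab : a ≤ b)
    (hYc : Continuous Y) (hY : IsSolutionOn F g a b y₀ Y) :
    ∀ t ∈ Icc a b, |Y t| ≤ 2 * (1 + |y₀|) * Real.exp (2 * C * (F b - F a)) := by
  have hφc : Continuous fun u => 1 + |Y u| := continuous_const.add hYc.abs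
  have hint : Continuous fun u => g u (Y u) := hgc.comp (continuous_id.prodMk hYc)
  have hφ : ∀ t ∈ Icc a b,
      1 + |Y t| ≤ (1 + |y₀|) + C * ∫ u in Ioc a t, (1 + |Y u|) ∂F.measure := by
    intro t ht
    have hI : |∫ u in Ioc a t, g u (Y u) ∂F.measure| ≤
        C * ∫ u in Ioc a t, (1 + |Y u|) ∂F.measure := by
      rw [← integral_const_mul]
      exact abs_integral_le_integral_abs.trans <| setIntegral_mono_on hint.abs.integrableOn_Ioc
        (continuous_const.mul hφc).integrableOn_Ioc measurableSet_Ioc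
        fun u hu => hgrowth u ⟨hu.1.le, hu.2.trans ht.2⟩ (Y u)
    rw [hY t ht]
    linarith [abs_add_le y₀ (∫ u in Ioc a t, g u (Y u) ∂F.measure)]
  intro t ht
  linarith [le_mul_exp_of_le_add_mul_integral hF hφc (fun u => by positivity) hC hab hφ t ht]

def truncate (R : ℝ) (g : ℝ → ℝ → ℝ) (u y : ℝ) : ℝ :=
  g u (max (-R) (min R y))

section Truncate

variable {R : ℝ}

theorem truncate_of_abs_le {u y : ℝ} (h : |y| ≤ R) : truncate R g u y = g u y := by
  rw [truncate, min_eq_right (abs_le.1 h).2, max_eq_right (abs_le.1 h).1]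

theorem continuous_truncate (hgc : Continuous (uncurry g)) : Continuous (uncurry (truncate R g)) :=
  hgc.comp (continuous_fst.prodMk (continuous_const.max (continuous_const.min continuous_snd)))

theorem lipschitzWith_truncate (hR : 0 ≤ R) {L : ℝ≥0} {u : ℝ}
    (hg : LipschitzOnWith L (g u) (Icc (-R) R)) : LipschitzWith L (truncate R g u) := by
  have hclamp : LipschitzWith 1 fun y : ℝ => max (-R) (min R y) :=
    (LipschitzWith.id.const_min R).const_max (-R)
  have := lipschitzOnWith_univ.1 <| hg.comp hclamp.lipschitzOnWith
    fun y _ => ⟨le_max_left _ _, max_le (by linarith) (min_le_left _ _)⟩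
  rwa [mul_one] at this

theorem abs_truncate_le (hR : 0 ≤ R) {C u : ℝ} (hC : 0 ≤ C)
    (hgrowth : ∀ y, |g u y| ≤ C * (1 + |y|)) (y : ℝ) : |truncate R g u y| ≤ C * (1 + |y|) := by
  have hclamp : |max (-R) (min R y)| ≤ |y| := abs_le.2
    ⟨le_max_of_le_right (le_min (by linarith [abs_nonneg y]) (neg_abs_le y)),
      max_le (by linarith [abs_nonneg y]) ((min_le_right _ _).trans (le_abs_self y))⟩
  exact (hgrowth _).trans (by gcongr)

end Truncate

theorem exists_isSolutionOn (hF : Continuous F) (hgc : Continuous (uncurry g))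
    (hlip : ∀ R > 0, ∃ L : ℝ≥0, ∀ u, LipschitzOnWith L (g u) (Icc (-R) R)) {C : ℝ}
    (hgrowth : ∀ u ∈ Icc a b, ∀ y, |g u y| ≤ C * (1 + |y|)) (hab : a ≤ b) (y₀ : ℝ) :
    ∃ Y, Continuous Y ∧ IsSolutionOn F g a b y₀ Y := by
  have hC : 0 ≤ C := by simpa using (abs_nonneg _).trans (hgrowth a ⟨le_rfl, hab⟩ 0)
  set R := 2 * (1 + |y₀|) * Real.exp (2 * C * (F b - F a))
  have hR : 0 < R := by positivity
  obtain ⟨L, hL⟩ := hlip R hR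
  obtain ⟨Y, hYc, hY, -⟩ := existsUnique_isSolutionOn hF (continuous_truncate hgc)
    (fun u => lipschitzWith_truncate hR.le (hL u)) hab y₀
  -- The truncation level is the a priori bound, so the truncation is never active.
  have hbound := abs_le_of_isSolutionOn hF (continuous_truncate hgc) hC
    (fun u hu => abs_truncate_le hR.le hC (hgrowth u hu)) hab hYc hY
  exact ⟨Y, hYc, hY.congr_fun fun u hu => truncate_of_abs_le (hbound u hu)⟩

theorem eqOn_of_isSolutionOn (hF : Continuous F) (hgc : Continuous (uncurry g))
    (hlip : ∀ R > 0, ∃ L : ℝ≥0, ∀ u, LipschitzOnWith L (g u) (Icc (-R) R)) (hab : a ≤ b)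
    (hYc : Continuous Y) (hZc : Continuous Z) (hY : IsSolutionOn F g a b y₀ Y)
    (hZ : IsSolutionOn F g a b y₀ Z) : EqOn Y Z (Icc a b) := by
  obtain ⟨R₁, hR₁⟩ := isCompact_Icc.exists_bound_of_continuousOn hYc.continuousOn
  obtain ⟨R₂, hR₂⟩ := isCompact_Icc.exists_bound_of_continuousOn hZc.continuousOn
  set R := max (max R₁ R₂) 1
  have hR : 0 < R := lt_max_of_lt_right one_pos
  have htrunc : ∀ W : ℝ → ℝ, (∀ u ∈ Icc a b, |W u| ≤ R) → IsSolutionOn F g a b y₀ W →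
      IsSolutionOn F (truncate R g) a b y₀ W := fun W hW h =>
    h.congr_fun fun u hu => (truncate_of_abs_le (hW u hu)).symm
  obtain ⟨L, hL⟩ := hlip R hR
  obtain ⟨X, -, -, huniq⟩ := existsUnique_isSolutionOn hF (continuous_truncate hgc)
    (fun u => lipschitzWith_truncate hR.le (hL u)) hab y₀
  have hYX := huniq Y hYc (htrunc Y (fun u hu => (hR₁ u hu).trans
    ((le_max_left _ _).trans (le_max_left _ _))) hY)
  have hZX := huniq Z hZc (htrunc Z (fun u hu => (hR₂ u hu).trans
    ((le_max_right _ _).trans (le_max_left _ _))) hZ)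
  exact hYX.trans hZX.symm

end StieltjesODE

open StieltjesODE in
theorem stieltjes_ode_exists_unique_general
    (F : StieltjesFunction ℝ) (hFc : Continuous F)
    (f : ℝ → ℝ → ℝ)
    (hfc : Continuous fun p : ℝ × ℝ => f p.1 p.2)
    -- locally Lipschitz in the second argument, uniformly in the first
    (hlip : ∀ R > (0 : ℝ), ∃ L ≥ (0 : ℝ), ∀ x : ℝ, ∀ y ∈ Icc (-R) R, ∀ y' ∈ Icc (-R) R,
      |f x y - f x y'| ≤ L * |y - y'|)
    -- linear growth in the second argument, uniformly over the first in compacts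
    (hgrowth : ∀ K : Set ℝ, IsCompact K → ∃ C : ℝ, ∀ x ∈ K, ∀ y : ℝ,
      |f x y| ≤ C * (1 + |y|))
    (s : ℝ → ℝ) (hs : Continuous s) (x₀ : ℝ) :
    ∃ Y : ℝ → ℝ,
      (Continuous Y ∧
        ∀ t ≥ (0 : ℝ), Y t = x₀ + ∫ u in Ioc (0 : ℝ) t, f (s u) (Y u) ∂F.measure) ∧
      ∀ Z : ℝ → ℝ, Continuous Z →
        (∀ t ≥ (0 : ℝ), Z t = x₀ + ∫ u in Ioc (0 : ℝ) t, f (s u) (Z u) ∂F.measure) →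
        ∀ t ≥ (0 : ℝ), Z t = Y t := by
  set g : ℝ → ℝ → ℝ := fun u y => f (s u) y
  have hgc : Continuous (uncurry g) := hfc.comp (hs.prodMap continuous_id)
  have hglip : ∀ R > 0, ∃ L : ℝ≥0, ∀ u, LipschitzOnWith L (g u) (Icc (-R) R) := fun R hR => by
    obtain ⟨L, hL0, hL⟩ := hlip R hR
    refine ⟨L.toNNReal, fun u => LipschitzOnWith.of_dist_le_mul fun y hy y' hy' => ?_⟩
    simpa [Real.dist_eq, Real.coe_toNNReal L hL0] using hL (s u) y hy y' hy'
  have huniq : ∀ T ≥ 0, ∀ Y Z, Continuous Y → Continuous Z → IsSolutionOn F g 0 T x₀ Y →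
      IsSolutionOn F g 0 T x₀ Z → EqOn Y Z (Icc 0 T) := fun T hT Y Z =>
    eqOn_of_isSolutionOn hFc hgc hglip hT
  have hex : ∀ n : ℕ, ∃ Y, Continuous Y ∧ IsSolutionOn F g 0 n x₀ Y := fun n => by
    obtain ⟨C, hC⟩ := hgrowth _ ((isCompact_Icc (a := 0) (b := (n : ℝ))).image hs)
    exact exists_isSolutionOn hFc hgc hglip (fun u hu => hC _ (mem_image_of_mem s hu))
      n.cast_nonneg x₀
  choose Y hYc hY using hex
  obtain ⟨Z, hZc, hZY⟩ := exists_continuous_eqOn_Icc_of_nat hYc fun m n hmn =>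
    huniq m m.cast_nonneg _ _ (hYc m) (hYc n) (hY m) ((hY n).mono_right (by exact_mod_cast hmn))
  have hZ : ∀ T, IsSolutionOn F g 0 T x₀ Z := fun T => by
    obtain ⟨n, hn⟩ := exists_nat_ge T
    exact ((hY n).mono_right hn).congr ((hZY n).symm.mono (Icc_subset_Icc_right hn))
  refine ⟨Z, ⟨hZc, fun t ht => hZ t t ⟨ht, le_rfl⟩⟩, fun W hWc hW t ht => ?_⟩
  exact huniq t ht W Z hWc hZc (fun u hu => hW u hu.1) (hZ t) ⟨ht, le_rfl⟩

theorem stieltjes_ode_exists_unique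
    (F : StieltjesFunction ℝ) (hFc : Continuous F) (hF0 : F 0 = 0)
    (f : ℝ → ℝ → ℝ)
    (hfc : Continuous fun p : ℝ × ℝ => f p.1 p.2)
    -- bounded in the first argument
    (hbdd : ∀ y : ℝ, ∃ C : ℝ, ∀ x : ℝ, |f x y| ≤ C)
    -- locally Lipschitz in the second argument, uniformly in the first
    (hlip : ∀ R > (0 : ℝ), ∃ L ≥ (0 : ℝ), ∀ x : ℝ, ∀ y ∈ Icc (-R) R, ∀ y' ∈ Icc (-R) R,
      |f x y - f x y'| ≤ L * |y - y'|)
    -- linear growth in the second argument, uniformly over the first in compacts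
    (hgrowth : ∀ K : Set ℝ, IsCompact K → ∃ C : ℝ, ∀ x ∈ K, ∀ y : ℝ,
      |f x y| ≤ C * (1 + |y|))
    (s : ℝ → ℝ) (hs : Continuous s) (x₀ : ℝ) :
    ∃ Y : ℝ → ℝ,
      (Continuous Y ∧
        ∀ t ≥ (0 : ℝ), Y t = x₀ + ∫ u in Ioc (0 : ℝ) t, f (s u) (Y u) ∂F.measure) ∧
      ∀ Z : ℝ → ℝ, Continuous Z →
        (∀ t ≥ (0 : ℝ), Z t = x₀ + ∫ u in Ioc (0 : ℝ) t, f (s u) (Z u) ∂F.measure) →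
        ∀ t ≥ (0 : ℝ), Z t = Y t :=
  stieltjes_ode_exists_unique_general F hFc f hfc hlip hgrowth s hs x₀
end

section
/- Let μ : [0,∞) → [0,∞) be continuous non-decreasing with μ(0)=0, f : ℝ × ℝ → ℝ continuous, bounded in the first variable, locally Lipschitz with linear growth in the second variable, and let sₙ, s : [0,∞) → ℝ be continuous with sₙ → s locally uniformly. Let Yₙ and Y be the unique solutions of Yₙ(t) = x₀ + ∫₀^t f(sₙ(u), Yₙ(u)) dμ(u) and Y(t) = x₀ + ∫₀^t f(s(u), Y(u)) dμ(u). Then Yₙ → Y locally uniformly on [0,∞). -/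
/-!
By uniform convergence the drivers `sn n` and `s` take values in one compact set `K` on
`[0, T]`; linear growth of `f` on `K` and a Gronwall inequality for `dF` then bound all the
solutions by one constant `R`. On `K × [-R, R]` the function `f` is uniformly continuous and
`L`-Lipschitz in `y`, so for large `n` we get `|Yn - Y| ≤ ε + L ∫ |Yn - Y| dF`, and Gronwall
bounds `|Yn - Y|` on `[0, T]` by a fixed multiple of `ε`.

Gronwall for a continuous `F` is proved by cutting `[0, T]` into steps on which `L` times the
increment of `F` is at most `1/2`: on each step the maximum of `g` appears on both sides of the
inequality with coefficients `1` and `1/2`, so it can be absorbed.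
-/

open Set MeasureTheory Filter

theorem TendstoUniformlyOn.exists_isCompact_mapsTo {α X : Type*} [TopologicalSpace α]
    [PseudoMetricSpace X] [ProperSpace X] {G : ℕ → α → X} {g : α → X} {S : Set α}
    (h : TendstoUniformlyOn G g atTop S) (hS : IsCompact S) (hG : ∀ n, ContinuousOn (G n) S)
    (hg : ContinuousOn g S) :
    ∃ K, IsCompact K ∧ MapsTo g S K ∧ ∀ n, MapsTo (G n) S K := by
  obtain ⟨N, hN⟩ := eventually_atTop.1 (Metric.tendstoUniformlyOn_iff.1 h 1 one_pos)
  refine ⟨(⋃ i ∈ Iio N, G i '' S) ∪ Metric.cthickening 1 (g '' S),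
    ((finite_Iio N).isCompact_biUnion fun i _ => hS.image_of_continuousOn (hG i)).union
      (hS.image_of_continuousOn hg).cthickening,
    fun u hu => .inr (Metric.self_subset_cthickening _ (mem_image_of_mem g hu)), fun n u hu => ?_⟩
  rcases lt_or_ge n N with hn | hn
  · exact .inl (mem_biUnion hn (mem_image_of_mem (G n) hu))
  · exact .inr (Metric.mem_cthickening_of_dist_le _ _ _ _ (mem_image_of_mem g hu)
      (dist_comm (G n u) (g u) ▸ (hN n hn u hu).le))

theorem eventually_abs_sub_le_add_mul_of_tendstoUniformlyOn {f : ℝ → ℝ → ℝ}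
    (hf : Continuous fun p : ℝ × ℝ => f p.1 p.2) {K J : Set ℝ} (hK : IsCompact K)
    (hJ : IsCompact J) {L : ℝ} (hlip : ∀ x ∈ K, ∀ y ∈ J, ∀ y' ∈ J, |f x y - f x y'| ≤ L * |y - y'|)
    {α : Type*} {G : ℕ → α → ℝ} {g : α → ℝ} {S : Set α} (h : TendstoUniformlyOn G g atTop S)
    (hgK : MapsTo g S K) (hGK : ∀ n, MapsTo (G n) S K) {ε : ℝ} (hε : 0 < ε) :
    ∀ᶠ n in atTop, ∀ u ∈ S, ∀ y ∈ J, ∀ y' ∈ J,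
      |f (G n u) y - f (g u) y'| ≤ ε + L * |y - y'| := by
  obtain ⟨δ, hδ, hfδ⟩ := Metric.uniformContinuousOn_iff.1
    ((hK.prod hJ).uniformContinuousOn_of_continuous hf.continuousOn) ε hε
  filter_upwards [Metric.tendstoUniformlyOn_iff.1 h δ hδ] with n hn u hu y hy y' hy'
  have hclose : |f (G n u) y - f (g u) y| < ε := by
    refine hfδ (G n u, y) ⟨hGK n hu, hy⟩ (g u, y) ⟨hgK hu, hy⟩ ?_
    simpa [Prod.dist_eq, dist_comm] using hn u hu
  calc |f (G n u) y - f (g u) y'|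
      ≤ |f (G n u) y - f (g u) y| + |f (g u) y - f (g u) y'| := abs_sub_le _ _ _
    _ ≤ ε + L * |y - y'| := add_le_add hclose.le (hlip _ (hgK hu) y hy y' hy')

namespace StieltjesFunction

variable (F : StieltjesFunction ℝ)

theorem measureReal_Ioc {a b : ℝ} (hab : a ≤ b) : F.measure.real (Ioc a b) = F b - F a := by
  rw [measureReal_def, F.measure_Ioc, ENNReal.toReal_ofReal (sub_nonneg.2 (F.mono hab))]

theorem setIntegral_Ioc_le_mul {ψ : ℝ → ℝ} (hψ : Continuous ψ) {a b B : ℝ} (hab : a ≤ b)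
    (hle : ∀ u ∈ Ioc a b, ψ u ≤ B) : ∫ u in Ioc a b, ψ u ∂F.measure ≤ B * (F b - F a) := by
  calc ∫ u in Ioc a b, ψ u ∂F.measure ≤ ∫ _ in Ioc a b, B ∂F.measure :=
        setIntegral_mono_on hψ.integrableOn_Ioc continuous_const.integrableOn_Ioc
          measurableSet_Ioc hle
    _ = B * (F b - F a) := by
        rw [setIntegral_const, smul_eq_mul, F.measureReal_Ioc hab, mul_comm]

theorem abs_setIntegral_Ioc_le_add_mul {ψ g : ℝ → ℝ} (hψ : Continuous ψ) (hg : Continuous g)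
    {a b ε L : ℝ} (hab : a ≤ b) (hle : ∀ u ∈ Ioc a b, |ψ u| ≤ ε + L * g u) :
    |∫ u in Ioc a b, ψ u ∂F.measure|
      ≤ ε * (F b - F a) + L * ∫ u in Ioc a b, g u ∂F.measure := by
  calc |∫ u in Ioc a b, ψ u ∂F.measure| ≤ ∫ u in Ioc a b, |ψ u| ∂F.measure :=
        abs_integral_le_integral_abs
    _ ≤ ∫ u in Ioc a b, (ε + L * g u) ∂F.measure :=
        setIntegral_mono_on hψ.abs.integrableOn_Ioc (by fun_prop : Continuous _).integrableOn_Ioc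
          measurableSet_Ioc hle
    _ = ε * (F b - F a) + L * ∫ u in Ioc a b, g u ∂F.measure := by
        rw [integral_add continuous_const.integrableOn_Ioc
          (hg.const_mul L).integrableOn_Ioc, setIntegral_const, smul_eq_mul,
          integral_const_mul, F.measureReal_Ioc hab, mul_comm]

variable {F}

theorem le_two_mul_of_le_add_mul_setIntegral {g : ℝ → ℝ} (hg : Continuous g) {a L M p q : ℝ}
    (hL : 0 ≤ L) (hp : 0 ≤ p) (hpq : p ≤ q) (hnn : ∀ t ∈ Icc 0 q, 0 ≤ g t)
    (hle : ∀ t ∈ Icc 0 q, g t ≤ a + L * ∫ u in Ioc 0 t, g u ∂F.measure)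
    (hM : ∀ t ∈ Icc 0 p, g t ≤ M) (hsmall : L * (F q - F p) ≤ 1 / 2) :
    ∀ t ∈ Icc 0 q, g t ≤ 2 * (a + L * (M * (F p - F 0))) := by
  obtain ⟨t₀, ht₀, hmax⟩ :=
    isCompact_Icc.exists_isMaxOn ⟨0, le_rfl, hp.trans hpq⟩ hg.continuousOn
  have hM0 : 0 ≤ M := (hnn 0 ⟨le_rfl, hp.trans hpq⟩).trans (hM 0 ⟨le_rfl, hp⟩)
  -- Beyond `p` the integrand is bounded by the maximum `g t₀` itself.
  have hkey : g t₀ ≤ a + L * (M * (F p - F 0)) + L * (F q - F p) * g t₀ := by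
    have hrest : 0 ≤ L * (F q - F p) * g t₀ :=
      mul_nonneg (mul_nonneg hL (sub_nonneg.2 (F.mono hpq))) (hnn t₀ ht₀)
    rcases le_or_gt t₀ p with hp₀ | hp₀
    · have h1 := F.setIntegral_Ioc_le_mul hg ht₀.1 fun u hu => hM u ⟨hu.1.le, hu.2.trans hp₀⟩
      have h2 : M * (F t₀ - F 0) ≤ M * (F p - F 0) := by gcongr
      nlinarith [hle t₀ ht₀]
    · have hsplit : ∫ u in Ioc 0 t₀, g u ∂F.measure
          = (∫ u in Ioc 0 p, g u ∂F.measure) + ∫ u in Ioc p t₀, g u ∂F.measure := by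
        rw [← setIntegral_union (Ioc_disjoint_Ioc_of_le le_rfl) measurableSet_Ioc
          hg.integrableOn_Ioc hg.integrableOn_Ioc, Ioc_union_Ioc_eq_Ioc hp hp₀.le]
      have h1 := F.setIntegral_Ioc_le_mul hg hp fun u hu => hM u ⟨hu.1.le, hu.2⟩
      have h2 := F.setIntegral_Ioc_le_mul hg hp₀.le fun u hu =>
        hmax ⟨hp.trans hu.1.le, hu.2.trans ht₀.2⟩
      have h3 : g t₀ * (F t₀ - F p) ≤ g t₀ * (F q - F p) := by
        gcongr
        exacts [hnn t₀ ht₀, ht₀.2]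
      have := hle t₀ ht₀
      rw [hsplit] at this
      nlinarith
  intro t ht
  have : L * (F q - F p) * g t₀ ≤ 1 / 2 * g t₀ :=
    mul_le_mul_of_nonneg_right hsmall (hnn t₀ ht₀)
  linarith [show g t ≤ g t₀ from hmax ht]

theorem exists_forall_le_mul_of_le_add_mul_setIntegral (hFc : Continuous F) {L T : ℝ}
    (hL : 0 ≤ L) (hT : 0 ≤ T) :
    ∃ K, ∀ (g : ℝ → ℝ) (a : ℝ), Continuous g → (∀ t ∈ Icc 0 T, 0 ≤ g t) →
      (∀ t ∈ Icc 0 T, g t ≤ a + L * ∫ u in Ioc 0 t, g u ∂F.measure) →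
      ∀ t ∈ Icc 0 T, g t ≤ K * a := by
  obtain ⟨δ, hδ, hFδ⟩ := Metric.uniformContinuousOn_iff.1
    (isCompact_Icc.uniformContinuousOn_of_continuous hFc.continuousOn) (1 / (2 * L + 2))
    (by positivity)
  have hsmall : ∀ p ∈ Icc 0 T, ∀ q ∈ Icc 0 T, p ≤ q → q - p < δ → L * (F q - F p) ≤ 1 / 2 := by
    intro p hp q hq hpq hqp
    have hdist := hFδ q hq p hp (by rwa [Real.dist_eq, abs_of_nonneg (sub_nonneg.2 hpq)])
    rw [Real.dist_eq, abs_of_nonneg (sub_nonneg.2 (F.mono hpq)), lt_div_iff₀' (by positivity)]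
      at hdist
    nlinarith [F.mono hpq]
  obtain ⟨N, hN⟩ := exists_nat_gt (T / δ)
  have hN0 : (0 : ℝ) < N := (div_nonneg hT hδ.le).trans_lt hN
  set h := T / N with h_def
  have hh : h < δ := by rwa [h_def, div_lt_iff₀ hN0, mul_comm, ← div_lt_iff₀ hδ]
  set c := 2 * (1 + L * (F T - F 0))
  have hc : 1 ≤ c := by nlinarith [F.mono hT]
  refine ⟨c ^ N, fun g a hg hnn hle => ?_⟩
  have ha : 0 ≤ a := by
    simpa using (hnn 0 ⟨le_rfl, hT⟩).trans (hle 0 ⟨le_rfl, hT⟩)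
  have hstep : ∀ i ≤ N, ∀ t ∈ Icc 0 (i * h), g t ≤ c ^ i * a := by
    intro i
    induction i with
    | zero =>
      intro _ t ht
      obtain rfl : t = 0 := by simpa using ht
      simpa using hle 0 ⟨le_rfl, hT⟩
    | succ i ih =>
      intro hi t ht
      have hp : 0 ≤ i * h := by positivity
      have hpq : i * h ≤ (i + 1 : ℕ) * h := by gcongr; omega
      have hq : (i + 1 : ℕ) * h ≤ T := by
        calc (i + 1 : ℕ) * h ≤ N * h := by gcongr
          _ = T := by rw [h_def, mul_div_cancel₀ _ hN0.ne']
      have hsub : Icc 0 ((i + 1 : ℕ) * h) ⊆ Icc 0 T := Icc_subset_Icc_right hq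
      have hstep_small : L * (F ((i + 1 : ℕ) * h) - F (i * h)) ≤ 1 / 2 :=
        hsmall _ ⟨hp, hpq.trans hq⟩ _ ⟨hp.trans hpq, hq⟩ hpq (by push_cast; linarith)
      have hFp : F (i * h) ≤ F T := F.mono (hpq.trans hq)
      calc g t ≤ 2 * (a + L * (c ^ i * a * (F (i * h) - F 0))) :=
            le_two_mul_of_le_add_mul_setIntegral hg hL hp hpq (fun t ht => hnn t (hsub ht))
              (fun t ht => hle t (hsub ht)) (ih (by omega)) hstep_small t ht
        _ ≤ 2 * (c ^ i * a + L * (c ^ i * a * (F T - F 0))) := by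
            gcongr
            exact le_mul_of_one_le_left ha (one_le_pow₀ hc)
        _ = c ^ (i + 1) * a := by ring
  exact fun t ht => hstep N le_rfl t (by rwa [h_def, mul_div_cancel₀ _ hN0.ne'])

theorem exists_abs_le_of_eq_add_setIntegral (hFc : Continuous F) {L T : ℝ} (hL : 0 ≤ L)
    (hT : 0 ≤ T) :
    ∃ K, ∀ (D ψ : ℝ → ℝ) (d ε : ℝ), Continuous D → Continuous ψ → 0 ≤ ε →
      (∀ t ∈ Icc 0 T, D t = d + ∫ u in Ioc 0 t, ψ u ∂F.measure) →
      (∀ u ∈ Icc 0 T, |ψ u| ≤ ε + L * |D u|) →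
      ∀ t ∈ Icc 0 T, |D t| ≤ K * (|d| + ε * (F T - F 0)) := by
  obtain ⟨K, hK⟩ := exists_forall_le_mul_of_le_add_mul_setIntegral hFc hL hT
  refine ⟨K, fun D ψ d ε hD hψ hε heq hle =>
    hK _ _ hD.abs (fun _ _ => abs_nonneg _) fun t ht => ?_⟩
  have hint := F.abs_setIntegral_Ioc_le_add_mul hψ hD.abs ht.1 fun u hu =>
    hle u ⟨hu.1.le, hu.2.trans ht.2⟩
  have hFt : ε * (F t - F 0) ≤ ε * (F T - F 0) := by gcongr; exact ht.2
  calc |D t| ≤ |d| + |∫ u in Ioc 0 t, ψ u ∂F.measure| := heq t ht ▸ abs_add_le _ _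
    _ ≤ |d| + ε * (F T - F 0) + L * ∫ u in Ioc 0 t, |D u| ∂F.measure := by linarith

theorem exists_mapsTo_Icc_of_eq_add_setIntegral (hFc : Continuous F) {f : ℝ → ℝ → ℝ}
    (hf : Continuous fun p : ℝ × ℝ => f p.1 p.2) {K : Set ℝ} {C T : ℝ} (hC0 : 0 ≤ C)
    (hC : ∀ x ∈ K, ∀ y, |f x y| ≤ C * (1 + |y|)) (hT : 0 ≤ T) (x₀ : ℝ) :
    ∃ R > 0, ∀ σ Z : ℝ → ℝ, Continuous σ → Continuous Z → MapsTo σ (Icc 0 T) K →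
      (∀ t ∈ Icc 0 T, Z t = x₀ + ∫ u in Ioc 0 t, f (σ u) (Z u) ∂F.measure) →
      MapsTo Z (Icc 0 T) (Icc (-R) R) := by
  obtain ⟨K₁, hK₁⟩ := F.exists_abs_le_of_eq_add_setIntegral hFc hC0 hT
  set B := K₁ * (|x₀| + C * (F T - F 0))
  refine ⟨|B| + 1, by positivity, fun σ Z hσ hZ hσK hZeq t ht => abs_le.1 ?_⟩
  calc |Z t| ≤ B := hK₁ Z _ x₀ C hZ (hf.comp (hσ.prodMk hZ)) hC0 hZeq
        (fun u hu => (hC _ (hσK hu) _).trans_eq (mul_one_add C _)) t ht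
    _ ≤ |B| + 1 := by linarith [le_abs_self B]

theorem tendstoUniformlyOn_of_eq_add_setIntegral (hFc : Continuous F) {f : ℝ → ℝ → ℝ}
    (hf : Continuous fun p : ℝ × ℝ => f p.1 p.2) {K J : Set ℝ} (hK : IsCompact K)
    (hJ : IsCompact J) {L T x₀ : ℝ} (hL : 0 ≤ L) (hT : 0 ≤ T)
    (hlip : ∀ x ∈ K, ∀ y ∈ J, ∀ y' ∈ J, |f x y - f x y'| ≤ L * |y - y'|)
    {G : ℕ → ℝ → ℝ} {g : ℝ → ℝ} (hconv : TendstoUniformlyOn G g atTop (Icc 0 T))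
    (hGc : ∀ n, Continuous (G n)) (hgc : Continuous g)
    (hGK : ∀ n, MapsTo (G n) (Icc 0 T) K) (hgK : MapsTo g (Icc 0 T) K)
    {Zn : ℕ → ℝ → ℝ} {Z : ℝ → ℝ} (hZnc : ∀ n, Continuous (Zn n)) (hZc : Continuous Z)
    (hZnJ : ∀ n, MapsTo (Zn n) (Icc 0 T) J) (hZJ : MapsTo Z (Icc 0 T) J)
    (hZneq : ∀ n, ∀ t ∈ Icc 0 T, Zn n t = x₀ + ∫ u in Ioc 0 t, f (G n u) (Zn n u) ∂F.measure)
    (hZeq : ∀ t ∈ Icc 0 T, Z t = x₀ + ∫ u in Ioc 0 t, f (g u) (Z u) ∂F.measure) :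
    TendstoUniformlyOn Zn Z atTop (Icc 0 T) := by
  obtain ⟨K₂, hK₂⟩ := F.exists_abs_le_of_eq_add_setIntegral hFc hL hT
  refine Metric.tendstoUniformlyOn_iff.2 fun ε hε => ?_
  obtain ⟨ε', hε', hε'ε⟩ := exists_pos_mul_lt hε (K₂ * (F T - F 0))
  filter_upwards [eventually_abs_sub_le_add_mul_of_tendstoUniformlyOn hf hK hJ hlip hconv hgK
    hGK hε'] with n hn t ht
  have hfn : Continuous fun u => f (G n u) (Zn n u) := hf.comp ((hGc n).prodMk (hZnc n))
  have hfg : Continuous fun u => f (g u) (Z u) := hf.comp (hgc.prodMk hZc)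
  have hdiff : ∀ t ∈ Icc 0 T, (Zn n - Z) t
      = 0 + ∫ u in Ioc 0 t, (f (G n u) (Zn n u) - f (g u) (Z u)) ∂F.measure := fun t ht => by
    rw [Pi.sub_apply, hZneq n t ht, hZeq t ht,
      integral_sub hfn.integrableOn_Ioc hfg.integrableOn_Ioc]
    ring
  rw [dist_comm, Real.dist_eq]
  calc |Zn n t - Z t| ≤ K₂ * (|0| + ε' * (F T - F 0)) :=
        hK₂ _ _ 0 ε' ((hZnc n).sub hZc) (hfn.sub hfg) hε'.le hdiff
          (fun u hu => hn u hu _ (hZnJ n hu) _ (hZJ hu)) t ht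
    _ < ε := by simpa [mul_assoc, mul_comm ε'] using hε'ε

end StieltjesFunction

theorem stieltjes_ode_stability_general
    (F : StieltjesFunction ℝ) (hFc : Continuous F)
    (f : ℝ → ℝ → ℝ)
    (hfc : Continuous fun p : ℝ × ℝ => f p.1 p.2)
    (hlip : ∀ R > (0 : ℝ), ∃ L ≥ (0 : ℝ), ∀ x : ℝ, ∀ y ∈ Icc (-R) R, ∀ y' ∈ Icc (-R) R,
      |f x y - f x y'| ≤ L * |y - y'|)
    (hgrowth : ∀ K : Set ℝ, IsCompact K → ∃ C : ℝ, ∀ x ∈ K, ∀ y : ℝ,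
      |f x y| ≤ C * (1 + |y|))
    (s : ℝ → ℝ) (hs : Continuous s)
    (sn : ℕ → ℝ → ℝ) (hsn : ∀ n, Continuous (sn n))
    (hconv : ∀ T > (0 : ℝ), TendstoUniformlyOn (fun n t => sn n t) s atTop (Icc 0 T))
    (x₀ : ℝ)
    (Yn : ℕ → ℝ → ℝ) (Y : ℝ → ℝ)
    (hYnc : ∀ n, Continuous (Yn n)) (hYc : Continuous Y)
    (hYneq : ∀ n : ℕ, ∀ t ≥ (0 : ℝ),
      Yn n t = x₀ + ∫ u in Ioc (0 : ℝ) t, f (sn n u) (Yn n u) ∂F.measure)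
    (hYeq : ∀ t ≥ (0 : ℝ),
      Y t = x₀ + ∫ u in Ioc (0 : ℝ) t, f (s u) (Y u) ∂F.measure) :
    ∀ T > (0 : ℝ), TendstoUniformlyOn (fun n t => Yn n t) Y atTop (Icc 0 T) := by
  intro T hT
  obtain ⟨K, hK, hsK, hsnK⟩ := (hconv T hT).exists_isCompact_mapsTo isCompact_Icc
    (fun n => (hsn n).continuousOn) hs.continuousOn
  obtain ⟨C, hC⟩ := hgrowth K hK
  have hC0 : 0 ≤ C := by simpa using (abs_nonneg _).trans (hC _ (hsK ⟨le_rfl, hT.le⟩) 0)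
  have hYneq' : ∀ n, ∀ t ∈ Icc 0 T, Yn n t = x₀ + ∫ u in Ioc 0 t, f (sn n u) (Yn n u) ∂F.measure :=
    fun n t ht => hYneq n t ht.1
  have hYeq' : ∀ t ∈ Icc 0 T, Y t = x₀ + ∫ u in Ioc 0 t, f (s u) (Y u) ∂F.measure :=
    fun t ht => hYeq t ht.1
  obtain ⟨R, hR, hbound⟩ := F.exists_mapsTo_Icc_of_eq_add_setIntegral hFc hfc hC0 hC hT.le x₀
  obtain ⟨L, hL, hLip⟩ := hlip R hR
  exact F.tendstoUniformlyOn_of_eq_add_setIntegral hFc hfc hK isCompact_Icc hL hT.le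
    (fun x _ => hLip x) (hconv T hT) hsn hs hsnK hsK hYnc hYc
    (fun n => hbound _ _ (hsn n) (hYnc n) (hsnK n) (hYneq' n)) (hbound _ _ hs hYc hsK hYeq')
    hYneq' hYeq'

theorem stieltjes_ode_stability
    (F : StieltjesFunction ℝ) (hFc : Continuous F) (hF0 : F 0 = 0)
    (f : ℝ → ℝ → ℝ)
    (hfc : Continuous fun p : ℝ × ℝ => f p.1 p.2)
    (hbdd : ∀ y : ℝ, ∃ C : ℝ, ∀ x : ℝ, |f x y| ≤ C)
    (hlip : ∀ R > (0 : ℝ), ∃ L ≥ (0 : ℝ), ∀ x : ℝ, ∀ y ∈ Icc (-R) R, ∀ y' ∈ Icc (-R) R,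
      |f x y - f x y'| ≤ L * |y - y'|)
    (hgrowth : ∀ K : Set ℝ, IsCompact K → ∃ C : ℝ, ∀ x ∈ K, ∀ y : ℝ,
      |f x y| ≤ C * (1 + |y|))
    (s : ℝ → ℝ) (hs : Continuous s)
    (sn : ℕ → ℝ → ℝ) (hsn : ∀ n, Continuous (sn n))
    (hconv : ∀ T > (0 : ℝ), TendstoUniformlyOn (fun n t => sn n t) s atTop (Icc 0 T))
    (x₀ : ℝ)
    (Yn : ℕ → ℝ → ℝ) (Y : ℝ → ℝ)
    (hYnc : ∀ n, Continuous (Yn n)) (hYc : Continuous Y)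
    (hYneq : ∀ n : ℕ, ∀ t ≥ (0 : ℝ),
      Yn n t = x₀ + ∫ u in Ioc (0 : ℝ) t, f (sn n u) (Yn n u) ∂F.measure)
    (hYeq : ∀ t ≥ (0 : ℝ),
      Y t = x₀ + ∫ u in Ioc (0 : ℝ) t, f (s u) (Y u) ∂F.measure) :
    ∀ T > (0 : ℝ), TendstoUniformlyOn (fun n t => Yn n t) Y atTop (Icc 0 T) :=
  stieltjes_ode_stability_general F hFc f hfc hlip hgrowth s hs sn hsn hconv x₀ Yn Y hYnc hYc hYneq
    hYeq
end

section
/- Let σ : ℝ → ℝ be continuously differentiable with σ' bounded, and g the flow ∂g/∂x = σ(g), g(0,y)=y. Let s : [0,∞) → ℝ be continuous of locally bounded variation, μ continuous non-decreasing with μ(0)=0, b : ℝ → ℝ Lipschitz and bounded, and let Y solve Y(t) = x₀ + ∫₀^t ρ(s(u), Y(u)) b(g(s(u), Y(u))) dμ(u) where ρ(x,y) = (∂g/∂y(x,y))⁻¹. Then X(t) := g(s(t), Y(t)) solves X(t) = x₀ + ∫₀^t σ(X(u)) ds(u) + ∫₀^t b(X(u)) dμ(u) for all t ≥ 0 (Riemann–Stieltjes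 integrals). -/
/-!
Let `X t = g (s t) (Y t)`. On a short interval `[t₁, t₂]` split the increment of `X` into a move
of the first argument of `g` and a move of the second. Since `∂ₓ g = σ ∘ g`, the mean value
theorem makes the first move `σ (X t₁) (s t₂ - s t₁)` up to `ε |s t₂ - s t₁|`, and so is
`∫ σ (X) ds` up to `ε (Δs₁ + Δs₂)`. For the second, the difference of two trajectories of the
flow solves a scalar linear ODE, so `g x y' - g x y = (y' - y) J` with
`J = exp ∫₀ˣ (mean of σ' between the two trajectories)`; `J` is jointly continuous and equals
`ρ⁻¹` on the diagonal `y = y'`, so the equation for `Y` makes this move `∫ b (X) dμ` up to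
`ε Δμ`. Uniform continuity on compact cubes makes both estimates uniform in the interval, hence
`X - ∫ σ (X) ds - ∫ b (X) dμ` has increments bounded by `ε ΔV` for `V = 2 (s₁ + s₂) + μ`, and a
function with such increments for every `ε > 0` is constant.
-/

open Set MeasureTheory intervalIntegral Real Filter Topology

noncomputable def avgDeriv (f : ℝ → ℝ) (p q : ℝ) : ℝ :=
  ∫ θ in (0 : ℝ)..1, deriv f (p + θ * (q - p))

section avgDeriv

variable {f : ℝ → ℝ}

theorem sub_eq_mul_avgDeriv (hf : ContDiff ℝ 1 f) (p q : ℝ) :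
    f q - f p = (q - p) * avgDeriv f p q := by
  have h := integral_unitInterval_deriv_eq_sub (f := f) (f' := deriv f) (z₀ := p) (z₁ := q - p)
    (by fun_prop (disch := exact hf.continuous_deriv le_rfl))
    (fun _ _ => (hf.differentiable one_ne_zero _).hasDerivAt)
  simpa [avgDeriv] using h.symm

theorem avgDeriv_self (p : ℝ) : avgDeriv f p p = deriv f p := by
  simp [avgDeriv]

theorem abs_avgDeriv_le {M : ℝ} (hM : ∀ x, |deriv f x| ≤ M) (p q : ℝ) : |avgDeriv f p q| ≤ M := by
  simpa [avgDeriv] using norm_integral_le_of_norm_le_const (a := 0) (b := 1)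
    (f := fun θ => deriv f (p + θ * (q - p))) fun θ _ => hM _

theorem continuous_avgDeriv (hf : Continuous (deriv f)) :
    Continuous fun pq : ℝ × ℝ => avgDeriv f pq.1 pq.2 :=
  continuous_parametric_intervalIntegral_of_continuous' (by fun_prop) 0 1

end avgDeriv

theorem eq_mul_exp_integral_of_hasDerivAt {f a : ℝ → ℝ} (ha : Continuous a)
    (hf : ∀ z, HasDerivAt f (a z * f z) z) (x : ℝ) :
    f x = f 0 * exp (∫ z in (0 : ℝ)..x, a z) := by
  have hconst : ∀ z, HasDerivAt (fun w => f w * exp (-∫ u in (0 : ℝ)..w, a u)) 0 z := fun z => by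
    have hexp : HasDerivAt (fun w => exp (-∫ u in (0 : ℝ)..w, a u))
        (exp (-∫ u in (0 : ℝ)..z, a u) * -a z) z :=
      (ha.integral_hasStrictDerivAt 0 z).hasDerivAt.neg.exp
    exact ((hf z).mul hexp).congr_deriv (by ring)
  have h := is_const_of_deriv_eq_zero (fun z => (hconst z).differentiableAt)
    (fun z => (hconst z).deriv) x 0
  simp only [integral_same, neg_zero, exp_zero, mul_one] at h
  rw [← h, mul_assoc, ← exp_add, neg_add_cancel, exp_zero, mul_one]

theorem eq_of_forall_abs_sub_le_mul_sub {Z V : ℝ → ℝ} {a b : ℝ} (hab : a ≤ b)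
    (h : ∀ ε > 0, ∃ δ > 0, ∀ x ∈ Icc a b, ∀ y ∈ Icc a b, x ≤ y → y - x ≤ δ →
      |Z y - Z x| ≤ ε * (V y - V x)) :
    Z b = Z a := by
  have hbound : ∀ ε > 0, |Z b - Z a| ≤ ε * (V b - V a) := by
    intro ε hε
    obtain ⟨δ, hδ, hZ⟩ := h ε hε
    have hstep : ∀ n : ℕ, ∀ y ∈ Icc a b, y ≤ a + n * δ → |Z y - Z a| ≤ ε * (V y - V a) := by
      intro n
      induction n with
      | zero =>
        intro y hy hya
        obtain rfl : y = a := le_antisymm (by simpa using hya) hy.1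
        simp
      | succ n ih =>
        intro y hy hyn
        by_cases hy' : y ≤ a + n * δ
        · exact ih y hy hy'
        set p := a + n * δ
        have hp : p ∈ Icc a b := ⟨le_add_of_nonneg_right (by positivity), by linarith [hy.2]⟩
        have h1 := hZ p hp y hy (by linarith) (by push_cast at hyn; linarith)
        have h2 := ih p hp le_rfl
        calc |Z y - Z a| ≤ |Z y - Z p| + |Z p - Z a| := abs_sub_le _ _ _
          _ ≤ ε * (V y - V a) := by linarith
    obtain ⟨n, hn⟩ := exists_nat_ge ((b - a) / δ)
    exact hstep n b ⟨hab, le_rfl⟩ (by rw [div_le_iff₀ hδ] at hn; linarith)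
  have hlim : Tendsto (fun ε => ε * (V b - V a)) (𝓝[>] 0) (𝓝 0) := by
    simpa using ((tendsto_id (x := 𝓝 (0 : ℝ))).mul_const (V b - V a)).mono_left
      (nhdsWithin_le_nhds (s := Ioi 0))
  exact eq_of_abs_sub_nonpos (ge_of_tendsto hlim (eventually_nhdsWithin_of_forall hbound))

theorem setIntegral_Ioc_sub_setIntegral_Ioc {μ : Measure ℝ} {f : ℝ → ℝ} {c a b : ℝ}
    (hca : c ≤ a) (hab : a ≤ b) (hf : IntegrableOn f (Ioc c b) μ) :
    ∫ u in Ioc c b, f u ∂μ - ∫ u in Ioc c a, f u ∂μ = ∫ u in Ioc a b, f u ∂μ := by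
  rw [← Ioc_union_Ioc_eq_Ioc hca hab, setIntegral_union (Ioc_disjoint_Ioc_of_le le_rfl)
    measurableSet_Ioc (hf.mono_set (Ioc_subset_Ioc_right hab))
    (hf.mono_set (Ioc_subset_Ioc_left hca)), add_sub_cancel_left]

theorem abs_setIntegral_Ioc_sub_mul_le (ν : StieltjesFunction ℝ) {f : ℝ → ℝ} {a b c ε : ℝ}
    (hab : a ≤ b) (hf : IntegrableOn f (Ioc a b) ν.measure) (h : ∀ u ∈ Ioc a b, |f u - c| ≤ ε) :
    |∫ u in Ioc a b, f u ∂ν.measure - c * (ν b - ν a)| ≤ ε * (ν b - ν a) := by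
  have hfin : ν.measure (Ioc a b) < ⊤ := by simp [ν.measure_Ioc]
  have hreal : ν.measure.real (Ioc a b) = ν b - ν a := by
    rw [measureReal_def, ν.measure_Ioc, ENNReal.toReal_ofReal (sub_nonneg.2 (ν.mono hab))]
  have hconst : ∫ _ in Ioc a b, c ∂ν.measure = c * (ν b - ν a) := by
    rw [setIntegral_const, hreal, smul_eq_mul, mul_comm]
  rw [← hconst, ← integral_sub hf (integrableOn_const hfin.ne), ← hreal]
  exact norm_setIntegral_le_of_norm_le_const hfin fun u hu => (norm_eq_abs _).trans_le (h u hu)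

/-- The divided difference `(g x y' - g x y) / (y' - y)` of the flow, extended continuously to
`y = y'` (see `flow_sub_flow_eq_mul_flowSlope`). -/
noncomputable def flowSlope (σ : ℝ → ℝ) (g : ℝ → ℝ → ℝ) (x y y' : ℝ) : ℝ :=
  exp (∫ z in (0 : ℝ)..x, avgDeriv σ (g z y) (g z y'))

/-- The factor `ρ = (∂g/∂y)⁻¹` of the reduced equation. -/
noncomputable def flowRho (σ : ℝ → ℝ) (g : ℝ → ℝ → ℝ) (x y : ℝ) : ℝ :=
  exp (-∫ z in (0 : ℝ)..x, deriv σ (g z y))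

section Flow

variable {σ : ℝ → ℝ} {g : ℝ → ℝ → ℝ} {M : ℝ}

theorem continuous_flow_left (hgx : ∀ x y, HasDerivAt (fun x' => g x' y) (σ (g x y)) x)
    (y : ℝ) : Continuous fun x => g x y :=
  continuous_iff_continuousAt.2 fun x => (hgx x y).continuousAt

theorem flow_sub_flow_eq_mul_flowSlope (hσ : ContDiff ℝ 1 σ)
    (hgx : ∀ x y, HasDerivAt (fun x' => g x' y) (σ (g x y)) x) (hg0 : ∀ y, g 0 y = y)
    (x y y' : ℝ) : g x y' - g x y = (y' - y) * flowSlope σ g x y y' := by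
  have h := eq_mul_exp_integral_of_hasDerivAt (f := fun z => g z y' - g z y)
    ((continuous_avgDeriv (hσ.continuous_deriv le_rfl)).comp₂
      (continuous_flow_left hgx y) (continuous_flow_left hgx y'))
    (fun z => ((hgx z y').sub (hgx z y)).congr_deriv (by rw [sub_eq_mul_avgDeriv hσ, mul_comm]))
    x
  simpa [hg0, flowSlope] using h

theorem flowSlope_pos (x y y' : ℝ) : 0 < flowSlope σ g x y y' := exp_pos _

theorem flowSlope_le (hM : ∀ x, |deriv σ x| ≤ M) (x y y' : ℝ) :
    flowSlope σ g x y y' ≤ exp (M * |x|) := by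
  refine exp_le_exp.2 ((le_abs_self _).trans ?_)
  simpa using norm_integral_le_of_norm_le_const (a := 0) (b := x)
    (f := fun z => avgDeriv σ (g z y) (g z y')) fun z _ => abs_avgDeriv_le hM _ _

theorem flowSlope_self_mul_flowRho (x y : ℝ) : flowSlope σ g x y y * flowRho σ g x y = 1 := by
  simp [flowSlope, flowRho, avgDeriv_self, ← exp_add]

theorem continuous_flow (hσ : ContDiff ℝ 1 σ) (hM : ∀ x, |deriv σ x| ≤ M)
    (hgx : ∀ x y, HasDerivAt (fun x' => g x' y) (σ (g x y)) x) (hg0 : ∀ y, g 0 y = y) :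
    Continuous fun p : ℝ × ℝ => g p.1 p.2 := by
  refine continuous_iff_continuousAt.2 fun p => ?_
  have hM0 : 0 ≤ M := (abs_nonneg _).trans (hM 0)
  set r := |p.1| + 1
  have hlip : ∀ x ∈ Ioo (-r) r,
      LipschitzOnWith (exp (M * r)).toNNReal (fun y => g x y) univ := by
    refine fun x hx => LipschitzOnWith.of_dist_le_mul fun y _ y' _ => ?_
    rw [dist_eq, dist_eq, ← abs_neg, neg_sub, flow_sub_flow_eq_mul_flowSlope hσ hgx hg0, abs_mul,
      abs_of_pos (flowSlope_pos _ _ _), abs_sub_comm, mul_comm,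
      coe_toNNReal _ (exp_pos _).le]
    refine mul_le_mul_of_nonneg_right ((flowSlope_le hM _ _ _).trans ?_) (abs_nonneg _)
    exact exp_le_exp.2 (mul_le_mul_of_nonneg_left (abs_lt.2 hx).le hM0)
  have h := continuousOn_prod_of_continuousOn_lipschitzOnWith' (fun q : ℝ × ℝ => g q.1 q.2) _ hlip
    fun y _ => (continuous_flow_left hgx y).continuousOn
  exact h.continuousAt (prod_mem_nhds (Ioo_mem_nhds (by linarith [neg_abs_le p.1])
    (by linarith [le_abs_self p.1])) univ_mem)

theorem continuous_flowSlope (hσ : ContDiff ℝ 1 σ) (hM : ∀ x, |deriv σ x| ≤ M)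
    (hgx : ∀ x y, HasDerivAt (fun x' => g x' y) (σ (g x y)) x) (hg0 : ∀ y, g 0 y = y) :
    Continuous fun p : ℝ × ℝ × ℝ => flowSlope σ g p.1 p.2.1 p.2.2 := by
  have hg := continuous_flow hσ hM hgx hg0
  refine continuous_exp.comp (continuous_parametric_intervalIntegral_of_continuous
    (f := fun (p : ℝ × ℝ × ℝ) z => avgDeriv σ (g z p.2.1) (g z p.2.2)) ?_ continuous_fst)
  exact (continuous_avgDeriv (hσ.continuous_deriv le_rfl)).comp₂
    (hg.comp₂ continuous_snd (continuous_fst.comp (continuous_snd.comp continuous_fst)))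
    (hg.comp₂ continuous_snd (continuous_snd.comp (continuous_snd.comp continuous_fst)))

theorem continuous_flowRho (hσ : ContDiff ℝ 1 σ) (hM : ∀ x, |deriv σ x| ≤ M)
    (hgx : ∀ x y, HasDerivAt (fun x' => g x' y) (σ (g x y)) x) (hg0 : ∀ y, g 0 y = y) :
    Continuous fun p : ℝ × ℝ => flowRho σ g p.1 p.2 :=
  continuous_exp.comp (continuous_parametric_intervalIntegral_of_continuous
    (f := fun (p : ℝ × ℝ) z => deriv σ (g z p.2)) ((hσ.continuous_deriv le_rfl).comp
      ((continuous_flow hσ hM hgx hg0).comp₂ continuous_snd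
        (continuous_snd.comp continuous_fst))) continuous_fst).neg

theorem abs_flow_increment_fst_sub_integral_le
    (hgx : ∀ x y, HasDerivAt (fun x' => g x' y) (σ (g x y)) x)
    {s₁ s₂ : StieltjesFunction ℝ} {s Y : ℝ → ℝ} (hs : ∀ u, s u = s₁ u - s₂ u)
    (hsc : Continuous s) (hσX : Continuous fun u => σ (g (s u) (Y u))) {a b ε : ℝ}
    (hab : a ≤ b) (hε : ∀ v ∈ Icc a b, ∀ w ∈ Icc a b, |σ (g (s v) (Y w)) - σ (g (s a) (Y a))| ≤ ε) :
    |g (s b) (Y b) - g (s a) (Y b) - ((∫ u in Ioc a b, σ (g (s u) (Y u)) ∂s₁.measure) -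
        ∫ u in Ioc a b, σ (g (s u) (Y u)) ∂s₂.measure)| ≤
      2 * ε * (s₁ b - s₁ a + (s₂ b - s₂ a)) := by
  set c := σ (g (s a) (Y a))
  have hmvt : |g (s b) (Y b) - g (s a) (Y b) - c * (s b - s a)| ≤ ε * |s b - s a| := by
    have h := (convex_uIcc (s a) (s b)).norm_image_sub_le_of_norm_hasDerivWithin_le
      (f := fun z => g z (Y b) - c * z) (C := ε)
      (fun z _ => ((hgx z (Y b)).sub ((hasDerivAt_id z).const_mul c)).hasDerivWithinAt)
      (fun z hz => ?_) left_mem_uIcc right_mem_uIcc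
    · rw [norm_eq_abs, norm_eq_abs] at h
      convert h using 2
      ring
    · -- every point between `s a` and `s b` is `s v` for some `v ∈ [a, b]`
      obtain ⟨v, hv, rfl⟩ := intermediate_value_uIcc hsc.continuousOn hz
      rw [uIcc_of_le hab] at hv
      simpa using hε v hv b ⟨hab, le_rfl⟩
  have hsub : ∀ u ∈ Ioc a b, |σ (g (s u) (Y u)) - c| ≤ ε := fun u hu =>
    hε u (Ioc_subset_Icc_self hu) u (Ioc_subset_Icc_self hu)
  have h₁ := abs_setIntegral_Ioc_sub_mul_le s₁ hab hσX.integrableOn_Ioc hsub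
  have h₂ := abs_setIntegral_Ioc_sub_mul_le s₂ hab hσX.integrableOn_Ioc hsub
  have hsd : s b - s a = (s₁ b - s₁ a) - (s₂ b - s₂ a) := by rw [hs, hs]; ring
  have hΔs : |s b - s a| ≤ s₁ b - s₁ a + (s₂ b - s₂ a) := by
    rw [hsd, abs_le]; constructor <;> linarith [s₁.mono hab, s₂.mono hab]
  have hε0 : 0 ≤ ε := (abs_nonneg _).trans (hε a ⟨le_rfl, hab⟩ a ⟨le_rfl, hab⟩)
  calc _ = |(g (s b) (Y b) - g (s a) (Y b) - c * (s b - s a))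
          - ((∫ u in Ioc a b, σ (g (s u) (Y u)) ∂s₁.measure) - c * (s₁ b - s₁ a))
          + ((∫ u in Ioc a b, σ (g (s u) (Y u)) ∂s₂.measure) - c * (s₂ b - s₂ a))| := by
        congr 1; linear_combination c * hsd
    _ ≤ ε * |s b - s a| + ε * (s₁ b - s₁ a) + ε * (s₂ b - s₂ a) :=
        (abs_add_le _ _).trans (add_le_add ((abs_sub _ _).trans (add_le_add hmvt h₁)) h₂)
    _ ≤ _ := by linarith [mul_le_mul_of_nonneg_left hΔs hε0]

theorem abs_flow_increment_snd_sub_integral_le (hσ : ContDiff ℝ 1 σ)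
    (hgx : ∀ x y, HasDerivAt (fun x' => g x' y) (σ (g x y)) x) (hg0 : ∀ y, g 0 y = y)
    (F : StieltjesFunction ℝ) {h k : ℝ → ℝ} {a b x y y' ε : ℝ} (hab : a ≤ b)
    (hy : y' - y = ∫ u in Ioc a b, h u ∂F.measure) (hh : IntegrableOn h (Ioc a b) F.measure)
    (hk : IntegrableOn k (Ioc a b) F.measure)
    (hε : ∀ u ∈ Ioc a b, |flowSlope σ g x y y' * h u - k u| ≤ ε) :
    |g x y' - g x y - ∫ u in Ioc a b, k u ∂F.measure| ≤ ε * (F b - F a) := by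
  have hbound := abs_setIntegral_Ioc_sub_mul_le F hab ((hh.const_mul _).sub hk) (c := 0)
    (f := fun u => flowSlope σ g x y y' * h u - k u) fun u hu => by simpa using hε u hu
  rwa [zero_mul, sub_zero, integral_sub (hh.const_mul _) hk, MeasureTheory.integral_const_mul,
    ← hy, mul_comm, ← flow_sub_flow_eq_mul_flowSlope hσ hgx hg0] at hbound

theorem exists_pos_abs_flow_increment_fst_sub_integral_le (hσ : Continuous σ)
    (hgx : ∀ x y, HasDerivAt (fun x' => g x' y) (σ (g x y)) x)
    (hg : Continuous fun p : ℝ × ℝ => g p.1 p.2) {s₁ s₂ : StieltjesFunction ℝ} {s Y : ℝ → ℝ}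
    (hs : ∀ u, s u = s₁ u - s₂ u) (hsc : Continuous s) (hYc : Continuous Y) (t : ℝ) {ε : ℝ}
    (hε : 0 < ε) :
    ∃ δ > 0, ∀ t₁ ∈ Icc 0 t, ∀ t₂ ∈ Icc 0 t, t₁ ≤ t₂ → t₂ - t₁ ≤ δ →
      |g (s t₂) (Y t₂) - g (s t₁) (Y t₂) - ((∫ u in Ioc t₁ t₂, σ (g (s u) (Y u)) ∂s₁.measure) -
        ∫ u in Ioc t₁ t₂, σ (g (s u) (Y u)) ∂s₂.measure)| ≤
        2 * ε * (s₁ t₂ - s₁ t₁ + (s₂ t₂ - s₂ t₁)) := by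
  have hH : Continuous fun p : ℝ × ℝ => σ (g (s p.1) (Y p.2)) :=
    hσ.comp (hg.comp₂ (hsc.comp continuous_fst) (hYc.comp continuous_snd))
  obtain ⟨δ, hδ, hHε⟩ := Metric.uniformContinuousOn_iff_le.1
    ((isCompact_Icc.prod isCompact_Icc).uniformContinuousOn_of_continuous hH.continuousOn) ε hε
  refine ⟨δ, hδ, fun t₁ ht₁ t₂ ht₂ h₁₂ hδ₁₂ => ?_⟩
  have hsub : Icc t₁ t₂ ⊆ Icc 0 t := Icc_subset_Icc ht₁.1 ht₂.2
  have hnear : ∀ u ∈ Icc t₁ t₂, dist u t₁ ≤ δ := fun u hu =>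
    (dist_le_of_mem_Icc hu (left_mem_Icc.2 h₁₂)).trans hδ₁₂
  refine abs_flow_increment_fst_sub_integral_le hgx hs hsc (hσ.comp (hg.comp₂ hsc hYc)) h₁₂
    fun v hv w hw => ?_
  simpa [dist_eq] using hHε (v, w) ⟨hsub hv, hsub hw⟩ (t₁, t₁) ⟨ht₁, ht₁⟩
    (max_le (hnear v hv) (hnear w hw))

theorem exists_pos_abs_flow_increment_snd_sub_integral_le (hσ : ContDiff ℝ 1 σ)
    (hM : ∀ x, |deriv σ x| ≤ M) (hgx : ∀ x y, HasDerivAt (fun x' => g x' y) (σ (g x y)) x)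
    (hg0 : ∀ y, g 0 y = y) {b : ℝ → ℝ} (hb : Continuous b) {F : StieltjesFunction ℝ}
    {s Y : ℝ → ℝ} (hsc : Continuous s) (hYc : Continuous Y) {x₀ : ℝ}
    (hYeq : ∀ t ≥ (0 : ℝ), Y t = x₀ +
      ∫ u in Ioc (0 : ℝ) t, flowRho σ g (s u) (Y u) * b (g (s u) (Y u)) ∂F.measure)
    (t : ℝ) {ε : ℝ} (hε : 0 < ε) :
    ∃ δ > 0, ∀ t₁ ∈ Icc 0 t, ∀ t₂ ∈ Icc 0 t, t₁ ≤ t₂ → t₂ - t₁ ≤ δ →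
      |g (s t₁) (Y t₂) - g (s t₁) (Y t₁) - ∫ u in Ioc t₁ t₂, b (g (s u) (Y u)) ∂F.measure| ≤
        ε * (F t₂ - F t₁) := by
  have hbX : Continuous fun u => b (g (s u) (Y u)) :=
    hb.comp ((continuous_flow hσ hM hgx hg0).comp₂ hsc hYc)
  have hρb : Continuous fun u => flowRho σ g (s u) (Y u) * b (g (s u) (Y u)) :=
    ((continuous_flowRho hσ hM hgx hg0).comp₂ hsc hYc).mul hbX
  set K : ℝ × ℝ × ℝ → ℝ := fun p => flowSlope σ g (s p.1) (Y p.1) (Y p.2.1) *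
    (flowRho σ g (s p.2.2) (Y p.2.2) * b (g (s p.2.2) (Y p.2.2))) - b (g (s p.2.2) (Y p.2.2))
  have hK : Continuous K :=
    (((continuous_flowSlope hσ hM hgx hg0).comp₃ (hsc.comp continuous_fst)
      (hYc.comp continuous_fst) (hYc.comp (continuous_fst.comp continuous_snd))).mul
      (hρb.comp (continuous_snd.comp continuous_snd))).sub
      (hbX.comp (continuous_snd.comp continuous_snd))
  have hK0 : ∀ u, K (u, u, u) = 0 := fun u => by
    simp only [K, ← mul_assoc, flowSlope_self_mul_flowRho, one_mul, sub_self]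
  obtain ⟨δ, hδ, hKε⟩ := Metric.uniformContinuousOn_iff_le.1
    ((isCompact_Icc.prod (isCompact_Icc.prod isCompact_Icc)).uniformContinuousOn_of_continuous
      hK.continuousOn) ε hε
  refine ⟨δ, hδ, fun t₁ ht₁ t₂ ht₂ h₁₂ hδ₁₂ => ?_⟩
  have hsub : Icc t₁ t₂ ⊆ Icc 0 t := Icc_subset_Icc ht₁.1 ht₂.2
  have hnear : ∀ u ∈ Icc t₁ t₂, dist u t₁ ≤ δ := fun u hu =>
    (dist_le_of_mem_Icc hu (left_mem_Icc.2 h₁₂)).trans hδ₁₂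
  have hY : Y t₂ - Y t₁ =
      ∫ u in Ioc t₁ t₂, flowRho σ g (s u) (Y u) * b (g (s u) (Y u)) ∂F.measure := by
    rw [hYeq t₂ (ht₁.1.trans h₁₂), hYeq t₁ ht₁.1, add_sub_add_left_eq_sub]
    exact setIntegral_Ioc_sub_setIntegral_Ioc ht₁.1 h₁₂ hρb.integrableOn_Ioc
  refine abs_flow_increment_snd_sub_integral_le hσ hgx hg0 F h₁₂ hY hρb.integrableOn_Ioc
    hbX.integrableOn_Ioc fun u hu => ?_
  have hu' := Ioc_subset_Icc_self hu
  simpa [K, hK0, dist_eq, mul_assoc] using hKε (t₁, t₂, u) ⟨ht₁, ht₂, hsub hu'⟩ (t₁, t₁, t₁)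
    ⟨ht₁, ht₁, ht₁⟩
    (max_le (by simp [hδ.le]) (max_le (hnear t₂ (right_mem_Icc.2 h₁₂)) (hnear u hu')))

theorem exists_pos_abs_flow_increment_sub_integral_le (hσ : ContDiff ℝ 1 σ)
    (hM : ∀ x, |deriv σ x| ≤ M) (hgx : ∀ x y, HasDerivAt (fun x' => g x' y) (σ (g x y)) x)
    (hg0 : ∀ y, g 0 y = y) {b : ℝ → ℝ} (hb : Continuous b) {s₁ s₂ F : StieltjesFunction ℝ}
    {s Y : ℝ → ℝ} (hs : ∀ u, s u = s₁ u - s₂ u) (hsc : Continuous s) (hYc : Continuous Y)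
    {x₀ : ℝ} (hYeq : ∀ t ≥ (0 : ℝ), Y t = x₀ +
      ∫ u in Ioc (0 : ℝ) t, flowRho σ g (s u) (Y u) * b (g (s u) (Y u)) ∂F.measure)
    (t : ℝ) {ε : ℝ} (hε : 0 < ε) :
    ∃ δ > 0, ∀ t₁ ∈ Icc 0 t, ∀ t₂ ∈ Icc 0 t, t₁ ≤ t₂ → t₂ - t₁ ≤ δ →
      |g (s t₂) (Y t₂) - g (s t₁) (Y t₁) -
        ((∫ u in Ioc t₁ t₂, σ (g (s u) (Y u)) ∂s₁.measure) -
          (∫ u in Ioc t₁ t₂, σ (g (s u) (Y u)) ∂s₂.measure) +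
          ∫ u in Ioc t₁ t₂, b (g (s u) (Y u)) ∂F.measure)| ≤
        ε * (2 * (s₁ t₂ + s₂ t₂) + F t₂ - (2 * (s₁ t₁ + s₂ t₁) + F t₁)) := by
  obtain ⟨δ₁, hδ₁, h₁⟩ := exists_pos_abs_flow_increment_fst_sub_integral_le hσ.continuous hgx
    (continuous_flow hσ hM hgx hg0) hs hsc hYc t hε
  obtain ⟨δ₂, hδ₂, h₂⟩ :=
    exists_pos_abs_flow_increment_snd_sub_integral_le hσ hM hgx hg0 hb hsc hYc hYeq t hε
  refine ⟨min δ₁ δ₂, lt_min hδ₁ hδ₂, fun t₁ ht₁ t₂ ht₂ h₁₂ hδ => ?_⟩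
  calc _ = |(g (s t₂) (Y t₂) - g (s t₁) (Y t₂) -
          ((∫ u in Ioc t₁ t₂, σ (g (s u) (Y u)) ∂s₁.measure) -
            ∫ u in Ioc t₁ t₂, σ (g (s u) (Y u)) ∂s₂.measure)) +
        (g (s t₁) (Y t₂) - g (s t₁) (Y t₁) - ∫ u in Ioc t₁ t₂, b (g (s u) (Y u)) ∂F.measure)| := by
        congr 1; ring
    _ ≤ 2 * ε * (s₁ t₂ - s₁ t₁ + (s₂ t₂ - s₂ t₁)) + ε * (F t₂ - F t₁) :=
        (abs_add_le _ _).trans (add_le_add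
          (h₁ t₁ ht₁ t₂ ht₂ h₁₂ (hδ.trans (min_le_left _ _)))
          (h₂ t₁ ht₁ t₂ ht₂ h₁₂ (hδ.trans (min_le_right _ _))))
    _ = _ := by ring

end Flow

theorem doss_sussmann_transform_general
    (sig : ℝ → ℝ) (hC1 : ContDiff ℝ 1 sig) (M : ℝ) (hM : ∀ x, |deriv sig x| ≤ M)
    (g : ℝ → ℝ → ℝ)
    (hg0 : ∀ y, g 0 y = y)
    (hgx : ∀ x y, HasDerivAt (fun x' => g x' y) (sig (g x y)) x)
    (b : ℝ → ℝ) (Kb : NNReal) (hb : LipschitzWith Kb b)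
    (F s1 s2 : StieltjesFunction ℝ)
    (hs1 : Continuous s1) (hs2 : Continuous s2)
    (s : ℝ → ℝ) (hs : ∀ t, s t = s1 t - s2 t) (hs0 : s 0 = 0)
    (x₀ : ℝ) (Y : ℝ → ℝ) (hYc : Continuous Y)
    -- `Y` solves the reduced ODE `Y(t) = x₀ + ∫₀ᵗ ρ(s(u),Y(u)) b(g(s(u),Y(u))) dμ(u)`
    -- with `ρ(x,y) = exp(-∫₀ˣ σ'(g(z,y)) dz) = (∂g/∂y)⁻¹`
    (hYeq : ∀ t ≥ (0 : ℝ),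
      Y t = x₀ + ∫ u in Ioc (0 : ℝ) t,
        Real.exp (-(∫ z in (0 : ℝ)..(s u), deriv sig (g z (Y u)))) *
          b (g (s u) (Y u)) ∂F.measure) :
    -- then `X := g(s(·), Y(·))` solves `X = x₀ + ∫ σ(X) ds + ∫ b(X) dμ`
    ∀ t ≥ (0 : ℝ),
      g (s t) (Y t) = x₀ +
        ((∫ u in Ioc (0 : ℝ) t, sig (g (s u) (Y u)) ∂s1.measure) -
          ∫ u in Ioc (0 : ℝ) t, sig (g (s u) (Y u)) ∂s2.measure) +
        ∫ u in Ioc (0 : ℝ) t, b (g (s u) (Y u)) ∂F.measure := by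
  intro t ht
  have hsc : Continuous s := by rw [funext hs]; exact hs1.sub hs2
  have hX : Continuous fun u => g (s u) (Y u) := (continuous_flow hC1 hM hgx hg0).comp₂ hsc hYc
  have hσX : Continuous fun u => sig (g (s u) (Y u)) := hC1.continuous.comp hX
  have hbX : Continuous fun u => b (g (s u) (Y u)) := hb.continuous.comp hX
  set Z : ℝ → ℝ := fun u => g (s u) (Y u) -
    ((∫ v in Ioc 0 u, sig (g (s v) (Y v)) ∂s1.measure) -
      (∫ v in Ioc 0 u, sig (g (s v) (Y v)) ∂s2.measure) +
      ∫ v in Ioc 0 u, b (g (s v) (Y v)) ∂F.measure)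
  have hZ : Z t = Z 0 := eq_of_forall_abs_sub_le_mul_sub (V := fun u => 2 * (s1 u + s2 u) + F u)
    ht fun ε hε => by
      obtain ⟨δ, hδ, h⟩ := exists_pos_abs_flow_increment_sub_integral_le hC1 hM hgx hg0
        hb.continuous hs hsc hYc hYeq t hε
      refine ⟨δ, hδ, fun t₁ ht₁ t₂ ht₂ h₁₂ hδ₁₂ => ?_⟩
      convert h t₁ ht₁ t₂ ht₂ h₁₂ hδ₁₂ using 2
      simp only [Z]
      rw [← setIntegral_Ioc_sub_setIntegral_Ioc ht₁.1 h₁₂ hσX.integrableOn_Ioc,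
        ← setIntegral_Ioc_sub_setIntegral_Ioc ht₁.1 h₁₂ hσX.integrableOn_Ioc,
        ← setIntegral_Ioc_sub_setIntegral_Ioc ht₁.1 h₁₂ hbX.integrableOn_Ioc]
      ring
  have hY0 : Y 0 = x₀ := by simpa using hYeq 0 le_rfl
  simp only [Z, hs0, hg0, hY0, Ioc_self, Measure.restrict_empty, integral_zero_measure, sub_self,
    add_zero, sub_zero] at hZ
  linarith

theorem doss_sussmann_transform
    (sig : ℝ → ℝ) (hC1 : ContDiff ℝ 1 sig) (M : ℝ) (hM : ∀ x, |deriv sig x| ≤ M)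
    (g : ℝ → ℝ → ℝ)
    (hg0 : ∀ y, g 0 y = y)
    (hgx : ∀ x y, HasDerivAt (fun x' => g x' y) (sig (g x y)) x)
    (b : ℝ → ℝ) (Kb : NNReal) (hb : LipschitzWith Kb b) (Cb : ℝ) (hbB : ∀ x, |b x| ≤ Cb)
    (F s1 s2 : StieltjesFunction ℝ)
    (hFc : Continuous F) (hF0 : F 0 = 0)
    (hs1 : Continuous s1) (hs2 : Continuous s2)
    (s : ℝ → ℝ) (hs : ∀ t, s t = s1 t - s2 t) (hs0 : s 0 = 0)
    (x₀ : ℝ) (Y : ℝ → ℝ) (hYc : Continuous Y)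
    -- `Y` solves the reduced ODE `Y(t) = x₀ + ∫₀ᵗ ρ(s(u),Y(u)) b(g(s(u),Y(u))) dμ(u)`
    -- with `ρ(x,y) = exp(-∫₀ˣ σ'(g(z,y)) dz) = (∂g/∂y)⁻¹`
    (hYeq : ∀ t ≥ (0 : ℝ),
      Y t = x₀ + ∫ u in Ioc (0 : ℝ) t,
        Real.exp (-(∫ z in (0 : ℝ)..(s u), deriv sig (g z (Y u)))) *
          b (g (s u) (Y u)) ∂F.measure) :
    -- then `X := g(s(·), Y(·))` solves `X = x₀ + ∫ σ(X) ds + ∫ b(X) dμ`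
    ∀ t ≥ (0 : ℝ),
      g (s t) (Y t) = x₀ +
        ((∫ u in Ioc (0 : ℝ) t, sig (g (s u) (Y u)) ∂s1.measure) -
          ∫ u in Ioc (0 : ℝ) t, sig (g (s u) (Y u)) ∂s2.measure) +
        ∫ u in Ioc (0 : ℝ) t, b (g (s u) (Y u)) ∂F.measure :=
  doss_sussmann_transform_general sig hC1 M hM g hg0 hgx b Kb hb F s1 s2 hs1 hs2 s hs hs0 x₀ Y hYc
    hYeq
end
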